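/- arXiv:1602.05766 — 7 statements merged into one kernel-verified Lean document; each statement's English description precedes it below -/
import Mathlib

section
/- Let n ≥ 3 and let q be an isomorphism between finite induced subgraphs of the universal K_n-free graph H(n). Then q extends to an automorphism of H(n) all of whose orbits are infinite if and only if q has no complete components, i.e. no x with {x, q(x), q^2(x), …} forming a finite cycle of q. -/
/-- The Alice's restaurant property for K_n-free graphs. -/
def AliceProp {V : Type*} (G : SimpleGraph V) (n : ℕ) : Prop :=
  ∀ U W : Finset V, Disjoint U W →
    (G.induce (↑U : Set V)).CliqueFree (n - 1) →
    ∃ w : V, w ∉ U ∧ w ∉ W ∧ (∀ u ∈ U, G.Adj w u) ∧ ∀ v ∈ W, ¬ G.Adj w v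

open scoped Classical

section StmtSevenAux
variable {V : Type*} (G : SimpleGraph V)

/-- A finite partial isomorphism of `G` with no complete (cyclic) components. -/
structure PartIso where
  P : Finset (V × V)
  func : ∀ ⦃a b b'⦄, (a, b) ∈ P → (a, b') ∈ P → b = b'
  inj : ∀ ⦃a a' b⦄, (a, b) ∈ P → (a', b) ∈ P → a = a'
  adj : ∀ ⦃a b a' b'⦄, (a, b) ∈ P → (a', b') ∈ P → (G.Adj a a' ↔ G.Adj b b')
  acyc : ∀ (f : ℕ → V) (m : ℕ), 0 < m → (∀ k < m, (f k, f (k + 1)) ∈ P) → f m ≠ f 0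

variable {G}

namespace PartIso
noncomputable def rev (p : PartIso G) : PartIso G where
  P := p.P.image Prod.swap
  func := by
    intro a b b' hb hb'
    simp only [Finset.mem_image, Prod.ext_iff, Prod.swap] at hb hb'
    obtain ⟨⟨x, y⟩, hxy, h1, h2⟩ := hb
    obtain ⟨⟨x', y'⟩, hxy', h1', h2'⟩ := hb'
    subst h1; subst h2; subst h1'; subst h2'
    exact p.inj hxy hxy'
  inj := by
    intro a a' b ha ha'
    simp only [Finset.mem_image, Prod.ext_iff, Prod.swap] at ha ha'
    obtain ⟨⟨x, y⟩, hxy, h1, h2⟩ := ha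
    obtain ⟨⟨x', y'⟩, hxy', h1', h2'⟩ := ha'
    subst h1; subst h2; subst h1'; subst h2'
    exact p.func hxy hxy'
  adj := by
    intro a b a' b' ha ha'
    simp only [Finset.mem_image, Prod.ext_iff, Prod.swap] at ha ha'
    obtain ⟨⟨x, y⟩, hxy, h1, h2⟩ := ha
    obtain ⟨⟨x', y'⟩, hxy', h1', h2'⟩ := ha'
    subst h1; subst h2; subst h1'; subst h2'
    exact (p.adj hxy hxy').symm
  acyc := by
    intro f m hm hf h0
    refine p.acyc (fun k => f (m - k)) m hm ?_ ?_
    · intro k hk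
      have h := hf (m - (k + 1)) (by omega)
      have e1 : m - (k + 1) + 1 = m - k := by omega
      rw [e1] at h
      simp only [Finset.mem_image, Prod.ext_iff, Prod.swap] at h
      obtain ⟨⟨x, y⟩, hxy, h1, h2⟩ := h
      subst h1; subst h2
      exact hxy
    · simp only [Nat.sub_self, Nat.sub_zero]
      rw [h0]

lemma mem_rev {p : PartIso G} {a b : V} : (a, b) ∈ p.rev.P ↔ (b, a) ∈ p.P := by
  simp only [rev, Finset.mem_image, Prod.ext_iff, Prod.swap]
  constructor
  · rintro ⟨⟨x, y⟩, hxy, rfl, rfl⟩; exact hxy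
  · intro h; exact ⟨(b, a), h, rfl, rfl⟩

end PartIso

lemma forth {n : ℕ} (hn : 3 ≤ n) (hfree : G.CliqueFree n) (halice : AliceProp G n)
    (p : PartIso G) (a : V) :
    ∃ p' : PartIso G, p.P ⊆ p'.P ∧ ∃ b, (a, b) ∈ p'.P := by
  by_cases hdom : ∃ b, (a, b) ∈ p.P
  · exact ⟨p, subset_rfl, hdom⟩
  push_neg at hdom
  set U : Finset V := (p.P.filter (fun e => G.Adj a e.1)).image Prod.snd with hU
  set S : Finset V := p.P.image Prod.fst ∪ p.P.image Prod.snd ∪ {a} with hS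
  have hUmem : ∀ u, u ∈ U ↔ ∃ x, (x, u) ∈ p.P ∧ G.Adj a x := by
    intro u
    simp only [hU, Finset.mem_image, Finset.mem_filter]
    constructor
    · rintro ⟨⟨x, y⟩, ⟨hxy, hadj⟩, rfl⟩; exact ⟨x, hxy, hadj⟩
    · rintro ⟨x, hxy, hadj⟩; exact ⟨(x, u), ⟨hxy, hadj⟩, rfl⟩
  have hdomS : ∀ x y, (x, y) ∈ p.P → x ∈ S := by
    intro x y h
    simp only [hS, Finset.mem_union, Finset.mem_image]
    exact Or.inl (Or.inl ⟨(x, y), h, rfl⟩)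
  have hranS : ∀ x y, (x, y) ∈ p.P → y ∈ S := by
    intro x y h
    simp only [hS, Finset.mem_union, Finset.mem_image]
    exact Or.inl (Or.inr ⟨(x, y), h, rfl⟩)
  have haS : a ∈ S := by simp [hS]
  -- the set of required neighbours is (n-1)-clique-free
  have hcf : (G.induce (↑U : Set V)).CliqueFree (n - 1) := by
    intro t ht
    set xf : V → V := fun u =>
      if h : ∃ x, (x, u) ∈ p.P ∧ G.Adj a x then h.choose else u with hxfdef
    have hxf : ∀ u ∈ U, (xf u, u) ∈ p.P ∧ G.Adj a (xf u) := by
      intro u hu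
      rw [hUmem] at hu
      simp only [hxfdef, dif_pos hu]
      exact hu.choose_spec
    have hxfa : ∀ u ∈ U, xf u ≠ a := by
      intro u hu h
      exact hdom u (h ▸ (hxf u hu).1)
    set c : Finset V := insert a (t.image (fun u => xf u.1)) with hc
    have hinj : Set.InjOn (fun u : ↑(↑U : Set V) => xf u.1) ↑t := by
      intro u hu v hv h
      have h' : xf u.1 = xf v.1 := h
      have h1 := (hxf u.1 u.2).1
      rw [h'] at h1
      exact Subtype.ext (p.func h1 (hxf v.1 v.2).1)
    have hanotin : a ∉ t.image (fun u => xf u.1) := by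
      simp only [Finset.mem_image]
      rintro ⟨u, hu, h⟩
      exact hxfa u.1 u.2 h
    have hcard : c.card = n := by
      rw [hc, Finset.card_insert_of_notMem hanotin,
        Finset.card_image_of_injOn hinj, ht.2]
      omega
    refine hfree c ⟨?_, hcard⟩
    intro x hx y hy hxy
    simp only [hc, Finset.coe_insert, Set.mem_insert_iff, Finset.coe_image,
      Set.mem_image, Finset.mem_coe] at hx hy
    rcases hx with rfl | ⟨u, hu, rfl⟩
    · rcases hy with rfl | ⟨v, hv, rfl⟩
      · exact absurd rfl hxy
      · exact (hxf v.1 v.2).2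
    · rcases hy with rfl | ⟨v, hv, rfl⟩
      · exact ((hxf u.1 u.2).2).symm
      · have huv : u ≠ v := by rintro rfl; exact hxy rfl
        have hadj' : (G.induce (↑U : Set V)).Adj u v := ht.1 hu hv huv
        have : G.Adj u.1 v.1 := hadj'
        exact (p.adj (hxf u.1 u.2).1 (hxf v.1 v.2).1).mpr this
  obtain ⟨w, hwU, hwW, hwadj, hwnadj⟩ :=
    halice U (S \ U) Finset.disjoint_sdiff hcf
  have hwS : w ∉ S := by
    intro h
    rcases Finset.mem_sdiff.mpr ⟨h, hwU⟩ with h'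
    exact hwW h'
  have hwdom : ∀ b, (w, b) ∉ p.P := fun b h => hwS (hdomS _ _ h)
  have hwran : ∀ x, (x, w) ∉ p.P := fun x h => hwS (hranS _ _ h)
  have hwa : w ≠ a := fun h => hwS (h ▸ haS)
  have key : ∀ x y, (x, y) ∈ p.P → (G.Adj a x ↔ G.Adj w y) := by
    intro x y hxy
    constructor
    · intro h
      exact hwadj y ((hUmem y).mpr ⟨x, hxy, h⟩)
    · intro h
      by_contra hna
      have hyU : y ∉ U := by
        intro hyU
        obtain ⟨x', hx'y, hadj'⟩ := (hUmem y).mp hyU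
        exact hna ((p.inj hx'y hxy) ▸ hadj')
      exact hwnadj y (Finset.mem_sdiff.mpr ⟨hranS _ _ hxy, hyU⟩) h
  have hmem : ∀ x y : V, (x, y) ∈ insert (a, w) p.P ↔ (x = a ∧ y = w) ∨ (x, y) ∈ p.P := by
    intro x y
    simp [Finset.mem_insert, Prod.ext_iff]
  refine ⟨⟨insert (a, w) p.P, ?_, ?_, ?_, ?_⟩,
    Finset.subset_insert _ _, w, Finset.mem_insert_self _ _⟩
  · intro x b b' hb hb'
    rw [hmem] at hb hb'
    rcases hb with ⟨rfl, rfl⟩ | hb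
    · rcases hb' with ⟨-, rfl⟩ | hb'
      · rfl
      · exact absurd hb' (hdom b')
    · rcases hb' with ⟨rfl, rfl⟩ | hb'
      · exact absurd hb (hdom b)
      · exact p.func hb hb'
  · intro x x' b hx hx'
    rw [hmem] at hx hx'
    rcases hx with ⟨rfl, rfl⟩ | hx
    · rcases hx' with ⟨rfl, -⟩ | hx'
      · rfl
      · exact absurd hx' (hwran x')
    · rcases hx' with ⟨rfl, rfl⟩ | hx'
      · exact absurd hx (hwran x)
      · exact p.inj hx hx'
  · intro x y x' y' h h'
    rw [hmem] at h h'
    rcases h with ⟨rfl, rfl⟩ | h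
    · rcases h' with ⟨rfl, rfl⟩ | h'
      · simp
      · exact key x' y' h'
    · rcases h' with ⟨rfl, rfl⟩ | h'
      · exact ⟨fun hh => ((key x y h).mp hh.symm).symm,
          fun hh => ((key x y h).mpr hh.symm).symm⟩
      · exact p.adj h h'
  · intro f m hm hf h0
    by_cases hall : ∀ k < m, (f k, f (k + 1)) ∈ p.P
    · exact p.acyc f m hm hall h0
    push_neg at hall
    obtain ⟨k, hk, hknot⟩ := hall
    have hpair := hf k hk
    rw [hmem] at hpair
    rcases hpair with ⟨hka, hkw⟩ | hp
    · by_cases hkm : k + 1 < m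
      · have hpair2 := hf (k + 1) hkm
        rw [hmem] at hpair2
        rcases hpair2 with ⟨h1, -⟩ | h2
        · exact hwa (hkw ▸ h1)
        · exact hwdom (f (k + 2)) (hkw ▸ h2)
      · have hkm' : k + 1 = m := by omega
        have hf0 : f 0 = w := by rw [← h0, ← hkm', hkw]
        have hpair0 := hf 0 hm
        rw [hmem] at hpair0
        rcases hpair0 with ⟨h1, -⟩ | h2
        · exact hwa (hf0 ▸ h1)
        · exact hwdom (f 1) (hf0 ▸ h2)
    · exact hknot hp
lemma stepExt {n : ℕ} (hn : 3 ≤ n) (hfree : G.CliqueFree n) (halice : AliceProp G n)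
    (p : PartIso G) (a : V) :
    ∃ p' : PartIso G, p.P ⊆ p'.P ∧ (∃ b, (a, b) ∈ p'.P) ∧ ∃ c, (c, a) ∈ p'.P := by
  obtain ⟨p1, hsub1, b, hb⟩ := forth hn hfree halice p a
  obtain ⟨q, hsub2, c, hc⟩ := forth hn hfree halice p1.rev a
  have hsub3 : p1.P ⊆ q.rev.P := by
    intro xy hxy
    obtain ⟨x, y⟩ := xy
    exact PartIso.mem_rev.mpr (hsub2 (PartIso.mem_rev.mpr hxy))
  exact ⟨q.rev, hsub1.trans hsub3, ⟨b, hsub3 hb⟩, ⟨c, PartIso.mem_rev.mpr hc⟩⟩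

end StmtSevenAux

/-- Let n ≥ 3 and q an isomorphism between finite induced subgraphs of
the universal K_n-free graph H(n) (domain `s`, map `φ`).  Then q extends to an
automorphism of H(n) all of whose orbits are infinite if and only if q has no
complete components, i.e. there is no x ∈ dom(q) whose q-iterates stay in dom(q) and
return to x, forming a finite cycle of q. -/
theorem stmt_7 {V : Type*} [Countable V] (n : ℕ) (hn : 3 ≤ n) (G : SimpleGraph V)
    (hfree : G.CliqueFree n) (halice : AliceProp G n)
    (s : Finset V) (φ : V → V) (hinj : Set.InjOn φ ↑s)
    (hadj : ∀ a ∈ s, ∀ b ∈ s, (G.Adj a b ↔ G.Adj (φ a) (φ b))) :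
    (∃ g : G ≃g G, (∀ z ∈ s, g z = φ z) ∧
        ∀ v : V, {w : V | Equiv.Perm.SameCycle g.toEquiv v w}.Infinite) ↔
      ¬ ∃ x ∈ s, ∃ m : ℕ, 0 < m ∧ (∀ k < m, φ^[k] x ∈ s) ∧ φ^[m] x = x := by
  constructor
  · rintro ⟨g, hgs, hginf⟩ ⟨x, hxs, m, hm, hks, hmx⟩
    have hpow : ∀ (y : V) (k : ℕ), (g.toEquiv ^ (k + 1)) y = g.toEquiv ((g.toEquiv ^ k) y) := by
      intro y k
      rw [pow_succ']
      rfl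
    have claim : ∀ k, k ≤ m → (g.toEquiv ^ k) x = φ^[k] x := by
      intro k hk
      induction k with
      | zero => simp
      | succ k ih =>
        rw [hpow, ih (by omega), Function.iterate_succ_apply']
        exact hgs _ (hks k (by omega))
    have hfix : (g.toEquiv ^ m) x = x := (claim m le_rfl).trans hmx
    have hfixz : (g.toEquiv ^ (m : ℤ)) x = x := by rw [zpow_natCast]; exact hfix
    have hsub : {w | Equiv.Perm.SameCycle g.toEquiv x w} ⊆
        ↑((Finset.range m).image (fun k => (g.toEquiv ^ k) x)) := by
      rintro w ⟨i, hi⟩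
      simp only [Finset.coe_image, Finset.coe_range, Set.mem_image, Set.mem_Iio]
      have hmpos : (0 : ℤ) < (m : ℤ) := by exact_mod_cast hm
      have h2 := Int.emod_nonneg i (ne_of_gt hmpos)
      refine ⟨(i % (m : ℤ)).toNat, ?_, ?_⟩
      · have h1 := Int.emod_lt_of_pos i hmpos
        omega
      · have hfixmul : (g.toEquiv ^ ((m : ℤ) * (i / (m : ℤ)))) x = x := by
          rw [zpow_mul]
          exact Function.IsFixedPt.perm_zpow hfixz _
        have hkey : (g.toEquiv ^ i) x = (g.toEquiv ^ (i % (m : ℤ))) x := by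
          conv_lhs => rw [show i = i % (m : ℤ) + (m : ℤ) * (i / (m : ℤ)) from (Int.emod_add_mul_ediv i (m : ℤ)).symm]
          rw [zpow_add, Equiv.Perm.mul_apply, hfixmul]
        rw [← hi, hkey, ← zpow_natCast,
          show (((i % (m : ℤ)).toNat : ℤ)) = i % (m : ℤ) from Int.toNat_of_nonneg h2]
    exact hginf x (Set.Finite.subset (Finset.finite_toSet _) hsub)
  · intro hnc
    classical
    -- V is infinite
    have hex : ∀ W : Finset V, ∃ w, w ∉ W := by
      intro W
      have hcf : (G.induce (↑(∅ : Finset V) : Set V)).CliqueFree (n - 1) := by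
        intro t ht
        have hpos : 0 < t.card := by rw [ht.2]; omega
        obtain ⟨u, -⟩ := Finset.card_pos.mp hpos
        have := u.2
        simp at this
      obtain ⟨w, -, hw, -, -⟩ := halice ∅ W (by simp) hcf
      exact ⟨w, hw⟩
    have hVinf : Infinite V := by
      by_contra hfin
      rw [not_infinite_iff_finite] at hfin
      haveI := Fintype.ofFinite V
      obtain ⟨w, hw⟩ := hex Finset.univ
      exact hw (Finset.mem_univ w)
    obtain ⟨enc⟩ := nonempty_encodable V
    haveI := enc
    haveI := Denumerable.ofEncodableOfInfinite V
    set e : V ≃ ℕ := Denumerable.eqv V with he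
    -- the initial partial isomorphism
    have hp0mem : ∀ x y : V, (x, y) ∈ s.image (fun z => (z, φ z)) ↔ x ∈ s ∧ y = φ x := by
      intro x y
      simp only [Finset.mem_image, Prod.ext_iff]
      constructor
      · rintro ⟨z, hz, rfl, rfl⟩; exact ⟨hz, rfl⟩
      · rintro ⟨hx, rfl⟩; exact ⟨x, hx, rfl, rfl⟩
    set p0 : PartIso G := ⟨s.image (fun z => (z, φ z)), by
        intro a b b' hb hb'
        rw [hp0mem] at hb hb'
        rw [hb.2, hb'.2], by
        intro a a' b ha ha'
        rw [hp0mem] at ha ha'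
        exact hinj ha.1 ha'.1 (ha.2 ▸ ha'.2 ▸ rfl), by
        intro a b a' b' h h'
        rw [hp0mem] at h h'
        rw [h.2, h'.2]
        exact hadj a h.1 a' h'.1, by
        intro f m hm hf h0
        have hstep : ∀ k < m, f k ∈ s ∧ f (k + 1) = φ (f k) := by
          intro k hk
          exact (hp0mem _ _).mp (hf k hk)
        have hiter : ∀ k, k ≤ m → f k = φ^[k] (f 0) := by
          intro k hk
          induction k with
          | zero => simp
          | succ k ih =>
            rw [(hstep k (by omega)).2, ih (by omega), Function.iterate_succ_apply']
        refine hnc ⟨f 0, (hstep 0 hm).1, m, hm, ?_, ?_⟩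
        · intro k hk
          rw [← hiter k hk.le]
          exact (hstep k hk).1
        · rw [← hiter m le_rfl]
          exact h0⟩ with hp0
    -- the increasing sequence of partial isomorphisms
    choose stepF hstepSub hstepDom hstepRan using
      fun (p : PartIso G) (a : V) => stepExt hn hfree halice p a
    set pseq : ℕ → PartIso G :=
      fun k => Nat.rec p0 (fun k pk => stepF pk (e.symm k)) k with hpseq
    have hpsucc : ∀ k, pseq (k + 1) = stepF (pseq k) (e.symm k) := fun k => rfl
    have hmono : ∀ k l, k ≤ l → (pseq k).P ⊆ (pseq l).P := by
      intro k l hkl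
      induction l with
      | zero =>
        have : k = 0 := by omega
        rw [this]
      | succ l ih =>
        rcases Nat.eq_or_lt_of_le hkl with rfl | h
        · rfl
        · exact (ih (by omega)).trans (by rw [hpsucc]; exact hstepSub _ _)
    have hdomall : ∀ v, ∃ b, (v, b) ∈ (pseq (e v + 1)).P := by
      intro v
      have := hstepDom (pseq (e v)) (e.symm (e v))
      rw [Equiv.symm_apply_apply] at this
      rw [hpsucc, Equiv.symm_apply_apply]
      exact this
    have hranall : ∀ v, ∃ c, (c, v) ∈ (pseq (e v + 1)).P := by
      intro v
      have := hstepRan (pseq (e v)) (e.symm (e v))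
      rw [Equiv.symm_apply_apply] at this
      rw [hpsucc, Equiv.symm_apply_apply]
      exact this
    set F : V → V := fun v => (hdomall v).choose with hF
    set Finv : V → V := fun v => (hranall v).choose with hFinv
    have hFmem : ∀ v, (v, F v) ∈ (pseq (e v + 1)).P := fun v => (hdomall v).choose_spec
    have hFinvmem : ∀ v, (Finv v, v) ∈ (pseq (e v + 1)).P := fun v => (hranall v).choose_spec
    have hFeq : ∀ k x y, (x, y) ∈ (pseq k).P → F x = y := by
      intro k x y h
      have h1 := hmono _ (max k (e x + 1)) (le_max_left _ _) h
      have h2 := hmono _ (max k (e x + 1)) (le_max_right _ _) (hFmem x)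
      exact (pseq _).func h2 h1
    have hFinveq : ∀ k x y, (x, y) ∈ (pseq k).P → Finv y = x := by
      intro k x y h
      have h1 := hmono _ (max k (e y + 1)) (le_max_left _ _) h
      have h2 := hmono _ (max k (e y + 1)) (le_max_right _ _) (hFinvmem y)
      exact (pseq _).inj h2 h1
    have hleft : ∀ v, Finv (F v) = v := fun v => hFinveq (e v + 1) v (F v) (hFmem v)
    have hright : ∀ v, F (Finv v) = v := fun v => hFeq (e v + 1) (Finv v) v (hFinvmem v)
    set g0 : V ≃ V := ⟨F, Finv, hleft, hright⟩ with hg0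
    have hFadj : ∀ v w, G.Adj (F v) (F w) ↔ G.Adj v w := by
      intro v w
      set N := max (e v + 1) (e w + 1) with hN
      exact ((pseq N).adj (hmono _ N (le_max_left _ _) (hFmem v))
        (hmono _ N (le_max_right _ _) (hFmem w))).symm
    set g : G ≃g G := ⟨g0, fun {a b} => hFadj a b⟩ with hg
    refine ⟨g, ?_, ?_⟩
    · intro z hz
      exact hFeq 0 z (φ z) ((hp0mem z (φ z)).mpr ⟨hz, rfl⟩)
    · intro v
      by_contra hfin
      rw [Set.not_infinite] at hfin
      have hmemcyc : ∀ k : ℕ, (g.toEquiv ^ k) v ∈ {w | Equiv.Perm.SameCycle g.toEquiv v w} :=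
        fun k => ⟨(k : ℤ), by rw [zpow_natCast]⟩
      have hninj : ¬ Function.Injective (fun k : ℕ => (g.toEquiv ^ k) v) := by
        intro hinj'
        exact (Set.infinite_of_injective_forall_mem hinj' hmemcyc) hfin
      obtain ⟨i, j, hij, hne⟩ := Function.not_injective_iff.mp hninj
      have hpow : ∀ (y : V) (k : ℕ), (g.toEquiv ^ (k + 1)) y = F ((g.toEquiv ^ k) y) := by
        intro y k
        rw [pow_succ']
        rfl
      -- wlog i < j
      have hcyc : ∀ i j : ℕ, i < j → (g.toEquiv ^ i) v = (g.toEquiv ^ j) v → False := by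
        intro i j hlt hij
        set m := j - i with hm
        have hmpos : 0 < m := by omega
        have hfixm : (g.toEquiv ^ m) v = v := by
          have hj : j = i + m := by omega
          rw [hj, pow_add, Equiv.Perm.mul_apply] at hij
          exact ((g.toEquiv ^ i).injective hij).symm
        set fch : ℕ → V := fun k => (g.toEquiv ^ k) v with hfch
        set N := (Finset.range m).sup (fun k => e (fch k) + 1) with hNdef
        have hchain : ∀ k < m, (fch k, fch (k + 1)) ∈ (pseq N).P := by
          intro k hk
          have h1 : (fch k, F (fch k)) ∈ (pseq (e (fch k) + 1)).P := hFmem (fch k)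
          have h2 : fch (k + 1) = F (fch k) := hpow v k
          rw [h2]
          exact hmono _ N (Finset.le_sup (Finset.mem_range.mpr hk)) h1
        exact (pseq N).acyc fch m hmpos hchain (by
          show (g.toEquiv ^ m) v = (g.toEquiv ^ 0) v
          rw [hfixm, pow_zero]
          rfl)
      rcases hne.lt_or_gt with h | h
      · exact hcyc i j h hij
      · exact hcyc j i h hij.symm
end

section
/- Let Σ be a finite subset of ωK_n. There exists an automorphism f of ωK_n with all orbits infinite having Σ as a set of orbit representatives if and only if |Σ| is a multiple of n, say |Σ| = rn, and there exists a partition {P_1, …, P_r} of ℤ into infinite sets such that Σ meets the components indexed by each P_i in exactly n vertices in total, i.e. Σ_{j ∈ P_i} |L_j ∩ Σ| = n for all i. -/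
/-- ωK_n: the disjoint union of countably many copies of the complete graph K_n, with
connected components L_j = {j} × (Fin n) indexed by j ∈ ℤ. -/
def omegaKn (n : ℕ) : SimpleGraph (ℤ × Fin n) :=
  SimpleGraph.fromRel (fun u v => u.1 = v.1)

/-!
An automorphism `g` of ωK_n permutes the components, so it induces a permutation `b` of ℤ with
`(g x).1 = b x.1`. If every orbit of `g` is infinite then `b` has no periodic points: a power of
`g` stabilising a component would have a finite-order restriction to it. Hence every orbit of `g`
meets each component over a `b`-orbit exactly once, a set of orbit representatives meets the
components over each `b`-orbit in exactly `n` vertices, and the (finitely many) `b`-orbits form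
the partition.

Conversely, identify ℤ with `Fin r × ℤ` piece by piece, and relabel the vertices of each component
so that the `n` representatives lying over the `i`-th piece get pairwise distinct labels. In these
coordinates the translation `(i, m) ↦ (i, m + 1)`, keeping labels, is the required automorphism.
-/

open Equiv Function

namespace Equiv.Perm

variable {α β γ : Type*}

theorem semiconj_zpow {e : Perm α} {b : Perm β} {φ : α → β} (h : Semiconj φ e b) (k : ℤ) :
    Semiconj φ ⇑(e ^ k) ⇑(b ^ k) := by
  have hinv : Semiconj φ ⇑e⁻¹ ⇑b⁻¹ := h.inverses_right e.apply_symm_apply b.symm_apply_apply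
  induction k using Int.induction_on with
  | zero => exact Semiconj.id_right
  | succ m ih => rw [zpow_add_one, zpow_add_one, coe_mul, coe_mul]; exact ih.comp_right h
  | pred m ih => rw [zpow_sub_one, zpow_sub_one, coe_mul, coe_mul]; exact ih.comp_right hinv

theorem SameCycle.map_of_semiconj {e : Perm α} {b : Perm β} {φ : α → β} (h : Semiconj φ e b)
    {x y : α} (hxy : SameCycle e x y) : SameCycle b (φ x) (φ y) := by
  obtain ⟨k, rfl⟩ := hxy
  exact ⟨k, (semiconj_zpow h k x).symm⟩

theorem sameCycle_iff_of_semiconj {e : Perm α} {b : Perm β} (ψ : α ≃ β) (h : Semiconj ψ e b)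
    {x y : α} : SameCycle e x y ↔ SameCycle b (ψ x) (ψ y) := by
  have hsymm : Semiconj ψ.symm b e := fun y => by
    rw [ψ.symm_apply_eq, h, ψ.apply_symm_apply]
  exact ⟨fun hxy => hxy.map_of_semiconj h, fun hxy => by simpa using hxy.map_of_semiconj hsymm⟩

theorem eq_zero_of_zpow_apply_eq_self {e : Perm α} {x : α} (hx : {y | SameCycle e x y}.Infinite)
    {k : ℤ} (hk : (e ^ k) x = x) : k = 0 := by
  set p : ℤ := ↑(minimalPeriod (e • ·) x)
  have hpk : p ∣ k := MulAction.zpow_smul_eq_iff_minimalPeriod_dvd.1 hk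
  suffices p = 0 by simpa [this] using hpk
  by_contra hp
  have hp_pos : 0 < p := lt_of_le_of_ne (Int.natCast_nonneg _) (Ne.symm hp)
  refine hx (((Set.finite_Ico 0 p).image fun m => (e ^ m) x).subset ?_)
  rintro _ ⟨m, rfl⟩
  exact ⟨m % p, ⟨Int.emod_nonneg m hp, Int.emod_lt_of_pos m hp_pos⟩,
    MulAction.zpow_smul_mod_minimalPeriod e x m⟩

variable (γ) in
def shiftSnd : Perm (γ × ℤ) :=
  prodCongr (Equiv.refl γ) (Equiv.addRight 1)

theorem zpow_shiftSnd_apply (k : ℤ) (u : γ × ℤ) : (shiftSnd γ ^ k) u = (u.1, u.2 + k) := by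
  have hfst : Semiconj Prod.fst (shiftSnd γ) (1 : Perm γ) := fun _ => rfl
  have hsnd : Semiconj Prod.snd (shiftSnd γ) (Equiv.addRight 1) := fun _ => rfl
  refine Prod.ext ?_ ?_
  · simpa using semiconj_zpow hfst k u
  · simpa using semiconj_zpow hsnd k u

theorem sameCycle_shiftSnd_iff {u v : γ × ℤ} : SameCycle (shiftSnd γ) u v ↔ u.1 = v.1 := by
  refine ⟨fun ⟨k, hk⟩ => by rw [← hk, zpow_shiftSnd_apply], fun h => ?_⟩
  exact ⟨v.2 - u.2, by rw [zpow_shiftSnd_apply, h, add_sub_cancel]⟩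

theorem exists_semiconj_fst [Nonempty β] (e : Perm (α × β))
    (he : ∀ x y, (e x).1 = (e y).1 ↔ x.1 = y.1) : ∃ b : Perm α, Semiconj Prod.fst e b := by
  obtain ⟨c⟩ := ‹Nonempty β›
  have hbij : Bijective fun j => (e (j, c)).1 := by
    refine ⟨fun j j' h => by simpa using (he _ _).1 h, fun j => ⟨(e.symm (j, c)).1, ?_⟩⟩
    simpa using (he ((e.symm (j, c)).1, c) (e.symm (j, c))).2 rfl
  exact ⟨Equiv.ofBijective _ hbij, fun x => (he x (x.1, c)).2 rfl⟩

section Semiconj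

variable {e : Perm (α × β)} {b : Perm α} (hb : Semiconj Prod.fst e b)
include hb

/-- Since `e ^ k` permutes the finite fiber over `x.1`, a nonzero multiple of `k` fixes `x`. -/
theorem eq_zero_of_zpow_apply_fst_eq_self [Finite β] {x : α × β}
    (hx : {y | SameCycle e x y}.Infinite) {k : ℤ} (hk : (b ^ k) x.1 = x.1) : k = 0 := by
  have hfst : ∀ m : ℤ, ((e ^ (k * m)) x).1 = x.1 := fun m => by
    rw [semiconj_zpow hb, zpow_mul, zpow_apply_eq_self_of_apply_eq_self hk]
  obtain ⟨m, m', hne, hmm'⟩ :=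
    Finite.exists_ne_map_eq_of_infinite fun m : ℤ => ((e ^ (k * m)) x).2
  have hret : (e ^ (k * (m' - m))) x = x := by
    apply (e ^ (k * m)).injective
    rw [← mul_apply, ← zpow_add, show k * m + k * (m' - m) = k * m' by ring]
    exact Prod.ext ((hfst m').trans (hfst m).symm) hmm'.symm
  have := eq_zero_of_zpow_apply_eq_self hx hret
  rcases mul_eq_zero.1 this with hk0 | hmm
  · exact hk0
  · exact absurd (sub_eq_zero.1 hmm).symm hne

theorem infinite_sameCycle_fst [Finite β] {x : α × β} (hx : {y | SameCycle e x y}.Infinite) :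
    {j | SameCycle b x.1 j}.Infinite := by
  refine Set.infinite_of_injective_forall_mem (f := fun k : ℤ => (b ^ k) x.1)
    (fun k l hkl => ?_) (fun k => ⟨k, rfl⟩)
  have : (b ^ (-l + k)) x.1 = x.1 := by
    simp only at hkl
    rw [zpow_add, mul_apply, hkl, ← mul_apply, ← zpow_add, neg_add_cancel, zpow_zero, one_apply]
  have := eq_zero_of_zpow_apply_fst_eq_self hb hx this
  omega

/-- Each orbit of `e` meets the fiber over `j` exactly once, so the representatives lying over
the `b`-orbit of `j` are in bijection with that fiber. -/
theorem ncard_inter_sameCycle_fst [Finite β] (hinf : ∀ v, {w | SameCycle e v w}.Infinite)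
    {S : Set (α × β)} (htr : ∀ x, ∃! σ, σ ∈ S ∧ SameCycle e σ x) (j : α) :
    (S ∩ {x | SameCycle b j x.1}).ncard = Nat.card β := by
  choose μ hμ hμ_unique using htr
  have hrange : S ∩ {x | SameCycle b j x.1} = Set.range fun c : β => μ (j, c) := by
    ext σ
    constructor
    · rintro ⟨hσS, hσ⟩
      obtain ⟨k, hk⟩ := hσ.symm
      refine ⟨((e ^ k) σ).2, (hμ_unique (j, ((e ^ k) σ).2) σ ⟨hσS, k, Prod.ext ?_ rfl⟩).symm⟩
      rw [semiconj_zpow hb, hk]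
    · rintro ⟨c, rfl⟩
      exact ⟨(hμ (j, c)).1, ((hμ (j, c)).2.map_of_semiconj hb).symm⟩
  have hinj : Injective fun c : β => μ (j, c) := by
    intro c c' h
    obtain ⟨k, hk⟩ : SameCycle e (j, c) (j, c') :=
      (hμ (j, c)).2.symm.trans (by simpa only [h] using (hμ (j, c')).2)
    have hfix : (b ^ k) j = j := by
      rw [← semiconj_zpow hb k (j, c), hk]
    have hk0 : k = 0 := eq_zero_of_zpow_apply_fst_eq_self hb (hinf (j, c)) hfix
    simpa [hk0] using hk
  rw [hrange, Set.ncard_range_of_injective hinj]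

end Semiconj

end Equiv.Perm

open Equiv.Perm

section

variable {α β : Type*}

/-- The pieces of the partition are the orbits of the permutation `b` induced on the base. -/
theorem exists_partition_of_transversal [Finite β] [Nonempty β] {e : Perm (α × β)} {b : Perm α}
    (hb : Semiconj Prod.fst e b) (hinf : ∀ v, {w | SameCycle e v w}.Infinite)
    {S : Finset (α × β)} (htr : ∀ x, ∃! σ, σ ∈ S ∧ SameCycle e σ x) :
    ∃ r : ℕ, S.card = r * Nat.card β ∧
      ∃ P : Fin r → Set α,
        (∀ i, (P i).Infinite) ∧
        (Pairwise fun i j => Disjoint (P i) (P j)) ∧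
        (⋃ i, P i) = Set.univ ∧
        ∀ i, ((↑S : Set (α × β)) ∩ {x | x.1 ∈ P i}).ncard = Nat.card β := by
  classical
  obtain ⟨c⟩ := ‹Nonempty β›
  let Q := Quotient (SameCycle.setoid b)
  have : Finite Q := by
    refine Finite.of_surjective (fun σ : S => (⟦(σ : α × β).1⟧ : Q)) ?_
    rintro ⟨j⟩
    obtain ⟨σ, ⟨hσS, hσ⟩, -⟩ := htr (j, c)
    exact ⟨⟨σ, hσS⟩, Quotient.sound (hσ.map_of_semiconj hb)⟩
  let ν : α → Fin (Nat.card Q) := fun j => Finite.equivFin Q ⟦j⟧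
  have hfiber : ∀ i, ∃ j, ν ⁻¹' {i} = {j' | SameCycle b j j'} := by
    intro i
    obtain ⟨j, hj⟩ := Quotient.exists_rep ((Finite.equivFin Q).symm i)
    refine ⟨j, Set.ext fun j' => ?_⟩
    simp only [ν, Set.mem_preimage, Set.mem_singleton_iff, ← Equiv.eq_symm_apply, ← hj]
    exact Quotient.eq.trans sameCycle_comm
  have hcount : ∀ i, ((↑S : Set (α × β)) ∩ {x | x.1 ∈ ν ⁻¹' {i}}).ncard = Nat.card β := by
    intro i
    obtain ⟨j, hj⟩ := hfiber i
    rw [hj]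
    exact ncard_inter_sameCycle_fst hb hinf htr j
  refine ⟨Nat.card Q, ?_, fun i => ν ⁻¹' {i}, fun i => ?_, pairwise_disjoint_fiber ν,
    ?_, hcount⟩
  · rw [Finset.card_eq_sum_card_fiberwise (f := fun x => ν x.1) (t := Finset.univ) (by simp)]
    have hcard : ∀ i, (S.filter fun x => ν x.1 = i).card = Nat.card β := fun i => by
      rw [← Set.ncard_coe_finset, Finset.coe_filter]
      exact hcount i
    simp [hcard]
  · obtain ⟨j, hj⟩ := hfiber i
    show (ν ⁻¹' {i}).Infinite
    exact hj ▸ infinite_sameCycle_fst hb (hinf (j, c))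
  · exact Set.iUnion_eq_univ_iff.2 fun j => ⟨ν j, rfl⟩

theorem exists_equiv_prod_int_fst [Countable α] {ι : Type*} (f : α → ι)
    (hf : ∀ i, (f ⁻¹' {i}).Infinite) : ∃ κ : α ≃ ι × ℤ, ∀ x, (κ x).1 = f x := by
  have hfiber : ∀ i, Nonempty ({x // f x = i} ≃ ℤ) := fun i => by
    have : Infinite {x // f x = i} := (hf i).to_subtype
    exact nonempty_equiv_of_countable
  exact ⟨(Equiv.sigmaFiberEquiv f).symm.trans
    ((Equiv.sigmaCongrRight fun i => (hfiber i).some).trans (Equiv.sigmaEquivProd ι ℤ)),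
    fun _ => rfl⟩

theorem exists_perm_eqOn [Finite β] {s : Set β} {g : β → β} (hg : Set.InjOn g s) :
    ∃ π : Perm β, Set.EqOn π g s := by
  have := Fintype.ofFinite β
  obtain ⟨π, hπ⟩ := Set.MapsTo.exists_equiv_extend_of_card_eq (t := Finset.univ)
    Finset.card_univ.symm (fun c _ => Finset.mem_coe.2 (Finset.mem_univ (g c))) hg
  exact ⟨π.trans (Equiv.subtypeUnivEquiv Finset.mem_univ), hπ⟩

theorem exists_perm_family_relabel [Finite β] {ι : Type*} (f : α → ι) {S : Set (α × β)}
    (hS : ∀ i, Nonempty (β ≃ ↥(S ∩ {x | f x.1 = i}))) :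
    ∃ τ : α → Perm β, ∀ i c, ∃! σ, σ ∈ S ∧ f σ.1 = i ∧ τ σ.1 σ.2 = c := by
  let ε i : β ≃ ↥(S ∩ {x | f x.1 = i}) := (hS i).some
  have hlabel : ∀ j, Set.InjOn (fun c => (ε (f j) c : α × β).2) {c | (ε (f j) c : α × β).1 = j} :=
    fun j c hc c' hc' h => (ε (f j)).injective (Subtype.ext (Prod.ext (hc.trans hc'.symm) h))
  choose π hπ using fun j => exists_perm_eqOn (hlabel j)
  have hπε : ∀ i c, π (ε i c : α × β).1 c = (ε i c : α × β).2 := fun i c => by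
    have h := @hπ (ε i c : α × β).1 c
    rw [(ε i c).2.2] at h
    exact h rfl
  refine ⟨fun j => (π j)⁻¹, fun i c => ⟨ε i c, ⟨(ε i c).2.1, (ε i c).2.2, ?_⟩, ?_⟩⟩
  · rw [Perm.inv_eq_iff_eq, hπε]
  · rintro σ ⟨hσS, hσi, hσc⟩
    obtain ⟨c', hc'⟩ := (ε i).surjective ⟨σ, hσS, hσi⟩
    have hσ : (ε i c' : α × β) = σ := congrArg Subtype.val hc'
    rw [Perm.inv_eq_iff_eq, ← hσ] at hσc
    rw [← hσ, (π _).injective ((hπε i c').trans hσc)]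

section Chart

variable {ι : Type*} (κ : α ≃ ι × ℤ) (τ : α → Perm β)

/-- Coordinates `((piece, label), position)`: `κ` places the base point in its piece, `τ`
relabels its fiber. -/
def fiberChart : α × β ≃ (ι × β) × ℤ where
  toFun x := (((κ x.1).1, τ x.1 x.2), (κ x.1).2)
  invFun y := (κ.symm (y.1.1, y.2), (τ (κ.symm (y.1.1, y.2)))⁻¹ y.1.2)
  left_inv x := by simp
  right_inv y := by simp

def shiftAlong : Perm (α × β) :=
  (fiberChart κ τ).symm.permCongr (shiftSnd (ι × β))

theorem semiconj_fiberChart_shiftAlong :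
    Semiconj (fiberChart κ τ) (shiftAlong κ τ) (shiftSnd (ι × β)) :=
  fun x => by simp [shiftAlong]

theorem semiconj_fst_shiftAlong :
    Semiconj Prod.fst (shiftAlong κ τ) (κ.symm.permCongr (shiftSnd ι)) :=
  fun x => by simp [shiftAlong, shiftSnd, fiberChart, Prod.map]

theorem sameCycle_shiftAlong_iff {x y : α × β} :
    SameCycle (shiftAlong κ τ) x y ↔ (κ x.1).1 = (κ y.1).1 ∧ τ x.1 x.2 = τ y.1 y.2 := by
  rw [sameCycle_iff_of_semiconj _ (semiconj_fiberChart_shiftAlong κ τ),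
    sameCycle_shiftSnd_iff]
  simp [fiberChart]

theorem infinite_sameCycle_shiftAlong (v : α × β) :
    {w | SameCycle (shiftAlong κ τ) v w}.Infinite := by
  refine Set.infinite_of_injective_forall_mem
    (f := fun m : ℤ => (fiberChart κ τ).symm ((fiberChart κ τ v).1, m)) (fun m m' h => ?_)
    (fun m => ?_)
  · simpa using h
  · show SameCycle _ v _
    rw [sameCycle_iff_of_semiconj _ (semiconj_fiberChart_shiftAlong κ τ),
      sameCycle_shiftSnd_iff, Equiv.apply_symm_apply]

end Chart

theorem exists_perm_of_partition [Countable α] [Finite β] {ι : Type*} (P : ι → Set α)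
    (hinf : ∀ i, (P i).Infinite) (hdisj : Pairwise fun i j => Disjoint (P i) (P j))
    (hcover : (⋃ i, P i) = Set.univ) {S : Finset (α × β)}
    (hcard : ∀ i, ((↑S : Set (α × β)) ∩ {x | x.1 ∈ P i}).ncard = Nat.card β) :
    ∃ e : Perm (α × β), ∃ b : Perm α, Semiconj Prod.fst e b ∧
      (∀ v, {w | SameCycle e v w}.Infinite) ∧ ∀ x, ∃! σ, σ ∈ S ∧ SameCycle e σ x := by
  let hP := IndexedPartition.mk' P hdisj (fun i => (hinf i).nonempty)
    (Set.iUnion_eq_univ_iff.1 hcover)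
  simp_rw [hP.mem_iff_index_eq] at hcard
  obtain ⟨κ, hκ⟩ := exists_equiv_prod_int_fst hP.index fun i => by
    have h := hinf i
    rw [hP.eq] at h
    exact h
  obtain ⟨τ, hτ⟩ := exists_perm_family_relabel hP.index (S := ↑S) fun i =>
    have := (S.finite_toSet.inter_of_left {x | hP.index x.1 = i}).to_subtype
    Finite.card_eq.1 (by rw [← hcard i, Nat.card_coe_set_eq])
  refine ⟨shiftAlong κ τ, _, semiconj_fst_shiftAlong κ τ, infinite_sameCycle_shiftAlong κ τ,
    fun x => ?_⟩
  simpa only [sameCycle_shiftAlong_iff, hκ, Finset.mem_coe] using hτ (hP.index x.1) (τ x.1 x.2)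

end

theorem omegaKn_adj {n : ℕ} {x y : ℤ × Fin n} : (omegaKn n).Adj x y ↔ x ≠ y ∧ x.1 = y.1 := by
  simp [omegaKn, eq_comm (a := x.1)]

theorem omegaKn_iso_fst_eq_iff {n : ℕ} (g : omegaKn n ≃g omegaKn n) (x y : ℤ × Fin n) :
    (g x).1 = (g y).1 ↔ x.1 = y.1 := by
  rcases eq_or_ne x y with rfl | hxy
  · simp
  · simpa [omegaKn_adj, hxy] using g.map_adj_iff (v := x) (w := y)

def omegaKnIsoOfSemiconj {n : ℕ} (e : Perm (ℤ × Fin n)) (b : Perm ℤ)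
    (hb : Semiconj Prod.fst e b) : omegaKn n ≃g omegaKn n :=
  ⟨e, by simp [omegaKn_adj, hb _]⟩

/-- Let Σ be a finite subset of ωK_n.  There exists an automorphism of
ωK_n with all orbits infinite having Σ as a set of orbit representatives if and only
if |Σ| = r·n for some r, and there is a partition {P_1, …, P_r} of ℤ into infinite
sets such that Σ_{j ∈ P_i} |L_j ∩ Σ| = n for all i. -/
theorem stmt_9 (n : ℕ) (hn : 0 < n) (S : Finset (ℤ × Fin n)) :
    (∃ g : omegaKn n ≃g omegaKn n,
        (∀ v, {w | Equiv.Perm.SameCycle g.toEquiv v w}.Infinite) ∧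
        (∀ x, ∃! σ, σ ∈ S ∧ Equiv.Perm.SameCycle g.toEquiv σ x)) ↔
      ∃ r : ℕ, S.card = r * n ∧
        ∃ P : Fin r → Set ℤ,
          (∀ i, (P i).Infinite) ∧
          (Pairwise fun i j => Disjoint (P i) (P j)) ∧
          (⋃ i, P i) = Set.univ ∧
          ∀ i, ((↑S : Set (ℤ × Fin n)) ∩ {x | x.1 ∈ P i}).ncard = n := by
  have : Nonempty (Fin n) := ⟨⟨0, hn⟩⟩
  constructor
  · rintro ⟨g, hinf, htr⟩
    obtain ⟨b, hb⟩ := exists_semiconj_fst g.toEquiv (omegaKn_iso_fst_eq_iff g)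
    simpa using exists_partition_of_transversal hb hinf htr
  · rintro ⟨r, -, P, hinf, hdisj, hcover, hcard⟩
    obtain ⟨e, b, hb, hinf', htr⟩ :=
      exists_perm_of_partition (S := S) P hinf hdisj hcover (by simpa using hcard)
    exact ⟨omegaKnIsoOfSemiconj e b hb, hinf', htr⟩
end

section
/- Let f be an automorphism of ωK_n with all orbits infinite. Then the induced permutation f̄ of the component indices has no finite orbits, and every vertex of a component L_i lies in a distinct orbit of f; consequently the number of orbits of f equals n times the number of orbits of f̄ (when f has finitely many orbits). -/
lemma comp_eq {n : ℕ} (g : omegaKn n ≃g omegaKn n) (x y : ℤ × Fin n) (h : x.1 = y.1) :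
    (g x).1 = (g y).1 := by
  by_cases hxy : x = y
  · rw [hxy]
  · have hadj : (omegaKn n).Adj x y := by
      simp [omegaKn, SimpleGraph.fromRel_adj, hxy, h]
    have h2 := g.map_adj_iff.mpr hadj
    simp [omegaKn, SimpleGraph.fromRel_adj] at h2
    tauto

lemma pow_comp_eq {n : ℕ} (g : omegaKn n ≃g omegaKn n) (k : ℕ) : ∀ (x y : ℤ × Fin n),
    x.1 = y.1 → ((g.toEquiv ^ k) x).1 = ((g.toEquiv ^ k) y).1 := by
  induction k with
  | zero => intro x y h; simpa using h
  | succ m ih =>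
    intro x y h
    rw [pow_succ, Equiv.Perm.mul_apply, Equiv.Perm.mul_apply]
    exact ih _ _ (comp_eq g x y h)

lemma zpow_comp_eq {n : ℕ} (g : omegaKn n ≃g omegaKn n) (k : ℤ) (x y : ℤ × Fin n)
    (h : x.1 = y.1) : ((g.toEquiv ^ k) x).1 = ((g.toEquiv ^ k) y).1 := by
  cases k with
  | ofNat m => simpa using pow_comp_eq g m x y h
  | negSucc m =>
    rw [zpow_negSucc, ← inv_pow]
    have : g.toEquiv⁻¹ = g.symm.toEquiv := rfl
    rw [this]
    exact pow_comp_eq g.symm (m+1) x y h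

lemma fix_of_return {n : ℕ} (f : omegaKn n ≃g omegaKn n)
    (x : ℤ × Fin n) (m : ℤ) (hret : ((f.toEquiv ^ m) x).1 = x.1) :
    ∃ d : ℕ, 0 < d ∧ (f.toEquiv ^ (m * d)) x = x := by
  set F := f.toEquiv with hF
  have hcomp : ∀ a : Fin n, ((F ^ m) (x.1, a)).1 = x.1 := by
    intro a
    have h := zpow_comp_eq f m (x.1, a) x rfl
    rw [hret] at h; exact h
  have hn : 0 < n := by
    rcases Nat.eq_zero_or_pos n with h | h
    · exact absurd (by subst h; exact x.2.elim0) (fun c => c)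
    · exact h
  set h' : Fin n → Fin n := fun a => ((F ^ m) (x.1, a)).2 with hh'
  have hinj : Function.Injective h' := by
    intro a b hab
    have : (F ^ m) (x.1, a) = (F ^ m) (x.1, b) :=
      Prod.ext (by rw [hcomp a, hcomp b]) hab
    have := (F ^ m).injective this
    exact congrArg Prod.snd this
  have hiter : ∀ (k : ℕ) (a : Fin n), ((F ^ m) ^ k) (x.1, a) = (x.1, h'^[k] a) := by
    intro k
    induction k with
    | zero => intro a; rfl
    | succ j ih =>
      intro a
      rw [pow_succ, Equiv.Perm.mul_apply]
      have hstep : (F ^ m) (x.1, a) = (x.1, h' a) := Prod.ext (hcomp a) rfl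
      rw [hstep, ih, Function.iterate_succ_apply]
  -- pigeonhole
  obtain ⟨i, j, hij, heq⟩ := Fintype.exists_ne_map_eq_of_card_lt
    (fun k : Fin (n+1) => h'^[(k : ℕ)] x.2) (by simp)
  wlog hlt : (i : ℕ) < (j : ℕ) generalizing i j
  · exact this j i hij.symm heq.symm (by omega)
  refine ⟨(j : ℕ) - (i : ℕ), by omega, ?_⟩
  have hd : h'^[(j : ℕ) - (i : ℕ)] x.2 = x.2 := by
    have hiterinj : Function.Injective (h'^[(i : ℕ)]) := Function.Injective.iterate hinj _
    apply hiterinj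
    rw [← Function.iterate_add_apply]
    have : (i : ℕ) + ((j : ℕ) - (i : ℕ)) = (j : ℕ) := by omega
    rw [this]
    exact heq.symm
  have : (F ^ (m * (((j : ℕ) - (i : ℕ) : ℕ) : ℤ))) x = x := by
    rw [zpow_mul, zpow_natCast]
    calc ((F ^ m) ^ ((j : ℕ) - (i : ℕ))) x
        = ((F ^ m) ^ ((j : ℕ) - (i : ℕ))) (x.1, x.2) := by rw [Prod.mk.eta]
      _ = (x.1, h'^[(j : ℕ) - (i : ℕ)] x.2) := hiter _ _
      _ = x := by rw [hd]
  exact this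

lemma orbit_finite_of_fix {α : Type*} (F : Equiv.Perm α) (x : α) (M : ℤ) (hM : M ≠ 0)
    (hfix : (F ^ M) x = x) : {w | Equiv.Perm.SameCycle F x w}.Finite := by
  -- get positive natural period
  set N : ℕ := M.natAbs with hN
  have hNpos : 0 < N := Int.natAbs_pos.mpr hM
  have hfixN : (F ^ (N : ℤ)) x = x := by
    rcases Int.natAbs_eq M with h | h
    · rw [← h]; exact hfix
    · have hinv : (F ^ (-M)) x = x := by
        have : (F ^ (-M)) ((F ^ M) x) = (F ^ (-M)) (x) := by rw [hfix]
        rw [← Equiv.Perm.mul_apply, ← zpow_add, neg_add_cancel, zpow_zero,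
          Equiv.Perm.one_apply] at this
        exact this.symm
      rw [← neg_neg ((N : ℤ)), ← h]; exact hinv
  have hfixmul : ∀ q : ℤ, (F ^ ((N : ℤ) * q)) x = x := by
    intro q
    rw [zpow_mul]
    exact Equiv.Perm.zpow_apply_eq_self_of_apply_eq_self hfixN q
  apply Set.Finite.subset (Set.finite_range (fun r : Fin N => (F ^ (r : ℤ)) x))
  rintro w ⟨k, hk⟩
  have h0 : 0 ≤ k % (N : ℤ) := Int.emod_nonneg k (by exact_mod_cast hNpos.ne')
  have h1 : k % (N : ℤ) < (N : ℤ) := Int.emod_lt_of_pos k (by exact_mod_cast hNpos)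
  refine ⟨⟨(k % (N : ℤ)).toNat, by omega⟩, ?_⟩
  simp only
  rw [Int.toNat_of_nonneg h0]
  calc (F ^ (k % (N : ℤ))) x
      = (F ^ (k % (N : ℤ))) ((F ^ ((N : ℤ) * (k / (N : ℤ)))) x) := by rw [hfixmul]
    _ = (F ^ (k % (N : ℤ) + (N : ℤ) * (k / (N : ℤ)))) x := by
        rw [zpow_add, Equiv.Perm.mul_apply]
    _ = (F ^ k) x := by rw [Int.emod_add_mul_ediv]
    _ = w := hk

lemma partc {n : ℕ} (hn : 0 < n) (f : omegaKn n ≃g omegaKn n)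
    (hb : ∀ (i : ℤ) (a b : Fin n), Equiv.Perm.SameCycle f.toEquiv (i, a) (i, b) → a = b) :
    {O : Set (ℤ × Fin n) | ∃ x, O = {y | Equiv.Perm.SameCycle f.toEquiv x y}}.ncard =
      n * {Q : Set ℤ | ∃ i : ℤ, Q =
        {j : ℤ | ∃ k : ℤ,
          (((f.toEquiv : Equiv.Perm (ℤ × Fin n)) ^ k) (i, ⟨0, hn⟩)).1 = j}}.ncard := by
  classical
  set F : Equiv.Perm (ℤ × Fin n) := f.toEquiv with hFdef
  set a0 : Fin n := ⟨0, hn⟩ with ha0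
  set Of : (ℤ × Fin n) → Set (ℤ × Fin n) := fun x => {y | Equiv.Perm.SameCycle F x y} with hOf
  set Qf : ℤ → Set ℤ := fun i => {j : ℤ | ∃ k : ℤ, ((F ^ k) (i, a0)).1 = j} with hQf
  set Oset : Set (Set (ℤ × Fin n)) := {O | ∃ x, O = Of x} with hOset
  set Qset : Set (Set ℤ) := {Q | ∃ i : ℤ, Q = Qf i} with hQset
  -- orbit set equalities
  have of_eq : ∀ x y, Equiv.Perm.SameCycle F x y → Of x = Of y := by
    intro x y hxy
    ext z
    exact ⟨fun h => hxy.symm.trans h, fun h => hxy.trans h⟩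
  have sc_of_eq : ∀ x y, Of x = Of y → Equiv.Perm.SameCycle F x y := by
    intro x y h
    have : y ∈ Of y := Equiv.Perm.SameCycle.refl F y
    rw [← h] at this
    exact this
  -- Qf is constant on f̄-orbits
  have qf_eq : ∀ (i : ℤ) (k : ℤ), Qf (((F ^ k) (i, a0)).1) = Qf i := by
    intro i k
    ext j
    constructor
    · rintro ⟨k', hk'⟩
      refine ⟨k' + k, ?_⟩
      rw [zpow_add, Equiv.Perm.mul_apply]
      rw [← zpow_comp_eq f k' ((((F ^ k) (i, a0)).1, a0)) ((F ^ k) (i, a0)) rfl]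
      exact hk'
    · rintro ⟨k'', hk''⟩
      refine ⟨k'' - k, ?_⟩
      rw [zpow_comp_eq f (k'' - k) ((((F ^ k) (i, a0)).1, a0)) ((F ^ k) (i, a0)) rfl]
      rw [← Equiv.Perm.mul_apply, ← zpow_add, sub_add_cancel]
      exact hk''
  -- choose representatives for Q-orbits
  have rep_spec : ∀ Q : Qset, ∃ i : ℤ, (Q : Set ℤ) = Qf i := fun Q => Q.2
  choose rep hrep using rep_spec
  -- the bijection
  have mem_O : ∀ x : ℤ × Fin n, Of x ∈ Oset := fun x => ⟨x, rfl⟩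
  set e : Fin n × Qset → Oset := fun p => ⟨Of (rep p.2, p.1), mem_O _⟩ with he
  have hbij : Function.Bijective e := by
    constructor
    · rintro ⟨a, Q⟩ ⟨a', Q'⟩ hEq
      have hOfeq : Of (rep Q, a) = Of (rep Q', a') := Subtype.ext_iff.mp hEq
      obtain ⟨k, hk⟩ := sc_of_eq _ _ hOfeq
      have h1 : ((F ^ k) (rep Q, a)).1 = rep Q' := congrArg Prod.fst hk
      have h1' : ((F ^ k) (rep Q, a0)).1 = rep Q' := by
        rw [← h1]
        exact zpow_comp_eq f k (rep Q, a0) (rep Q, a) rfl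
      have hQeq : Q = Q' := by
        apply Subtype.ext
        rw [hrep Q, hrep Q', ← h1', qf_eq]
      subst hQeq
      have haa : a = a' := hb (rep Q) a a' ⟨k, hk⟩
      rw [haa]
    · rintro ⟨O, x, rfl⟩
      have hQmem : Qf x.1 ∈ Qset := ⟨x.1, rfl⟩
      set QQ : Qset := ⟨Qf x.1, hQmem⟩ with hQQ
      have hQi : Qf x.1 = Qf (rep QQ) := hrep QQ
      have hx1 : x.1 ∈ Qf (rep QQ) := by
        rw [← hQi]
        exact ⟨0, rfl⟩
      obtain ⟨k, hk⟩ := hx1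
      have hz1 : ((F ^ (-k)) x).1 = rep QQ := by
        rw [zpow_comp_eq f (-k) x ((F ^ k) (rep QQ, a0)) hk.symm]
        rw [← Equiv.Perm.mul_apply, ← zpow_add, neg_add_cancel, zpow_zero]
        rfl
      refine ⟨⟨((F ^ (-k)) x).2, QQ⟩, ?_⟩
      apply Subtype.ext
      show Of (rep QQ, ((F ^ (-k)) x).2) = Of x
      have hzz : (rep QQ, ((F ^ (-k)) x).2) = (F ^ (-k)) x := Prod.ext hz1.symm rfl
      rw [hzz]
      exact of_eq _ _ (Equiv.Perm.SameCycle.symm ⟨-k, rfl⟩)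
  calc Oset.ncard = Nat.card Oset := (Nat.card_coe_set_eq Oset).symm
    _ = Nat.card (Fin n × Qset) := (Nat.card_congr (Equiv.ofBijective e hbij)).symm
    _ = Nat.card (Fin n) * Nat.card Qset := Nat.card_prod _ _
    _ = n * Qset.ncard := by rw [Nat.card_eq_fintype_card, Fintype.card_fin,
        Nat.card_coe_set_eq]

/-- Let f be an automorphism of ωK_n with all orbits infinite.  Then
(a) the induced permutation f̄ of the component indices has no finite orbits, i.e. no
power f^m with m ≠ 0 returns any vertex to its own component; (b) every vertex of a
component L_i lies in a distinct orbit of f; and (c) when f has finitely many orbits,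
the number of orbits of f equals n times the number of orbits of f̄. -/
theorem stmt_10 (n : ℕ) (hn : 0 < n) (f : omegaKn n ≃g omegaKn n)
    (hf : ∀ v, {w | Equiv.Perm.SameCycle f.toEquiv v w}.Infinite) :
    (∀ (x : ℤ × Fin n) (m : ℤ), m ≠ 0 →
        (((f.toEquiv : Equiv.Perm (ℤ × Fin n)) ^ m) x).1 ≠ x.1) ∧
    (∀ (i : ℤ) (a b : Fin n),
        Equiv.Perm.SameCycle f.toEquiv (i, a) (i, b) → a = b) ∧
    ({O : Set (ℤ × Fin n) | ∃ x, O = {y | Equiv.Perm.SameCycle f.toEquiv x y}}.Finite →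
      {O : Set (ℤ × Fin n) | ∃ x, O = {y | Equiv.Perm.SameCycle f.toEquiv x y}}.ncard =
        n * {Q : Set ℤ | ∃ i : ℤ, Q =
          {j : ℤ | ∃ k : ℤ,
            (((f.toEquiv : Equiv.Perm (ℤ × Fin n)) ^ k) (i, ⟨0, hn⟩)).1 = j}}.ncard) := by
  have parta : ∀ (x : ℤ × Fin n) (m : ℤ), m ≠ 0 → ((f.toEquiv ^ m) x).1 ≠ x.1 := by
    intro x m hm hret
    obtain ⟨d, hd, hfix⟩ := fix_of_return f x m hret
    have hMne : m * (d : ℤ) ≠ 0 := mul_ne_zero hm (by exact_mod_cast hd.ne')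
    exact hf x (orbit_finite_of_fix f.toEquiv x _ hMne hfix)
  have partb : ∀ (i : ℤ) (a b : Fin n),
      Equiv.Perm.SameCycle f.toEquiv (i, a) (i, b) → a = b := by
    rintro i a b ⟨k, hk⟩
    by_cases hk0 : k = 0
    · subst hk0
      simpa using congrArg Prod.snd hk
    · exact absurd (congrArg Prod.fst hk) (parta (i, a) k hk0)
  exact ⟨parta, partb, fun _ => partc hn f partb⟩
end

section
/- Let n ≥ 2, f ∈ Aut(nK_ω), Σ ⊆ nK_ω finite. Then A_{f,Σ} = {g ∈ Aut(nK_ω) : ⟨f̄, ḡ⟩ = S_n and Σ is a set of orbit representatives of g} is nonempty if and only if there exists σ ∈ S_n with ⟨f̄, σ⟩ = S_n such that for all i ∈ {1,…,n}, the union of the components L_{(i)σ^j} over j ∈ ℤ has nonempty intersection with Σ. -/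
/-- nK_ω: the disjoint union of n copies of the countably infinite complete graph,
with components L_i = {i} × ℕ. -/
def nKomega (n : ℕ) : SimpleGraph (Fin n × ℕ) :=
  SimpleGraph.fromRel (fun u v => u.1 = v.1)

/-!
An automorphism `g` of `nK_ω` permutes the components, and the pairs `(h, h̄)` form a subgroup of
`Perm (Fin n × ℕ) × Perm (Fin n)`. Hence `⟨f, g⟩` induces all of `S_n` iff `⟨f̄, ḡ⟩ = S_n`, and
every `g`-orbit projects into a `ḡ`-orbit, which gives necessity with `σ = ḡ`.

Conversely, if every `σ`-orbit of components meets `Σ`, then for each component `L_i` the pairs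
`(s, m) ∈ Σ × ℤ` with `(s)σ^m = i` form a countably infinite set, so there is a bijection
`E : Σ × ℤ ≃ nK_ω` sending `(s, m)` into `L_{(s)σ^m}` and `(s, 0)` to `s`. Transporting the
translation `m ↦ m + 1` along `E` gives an automorphism over `σ` whose orbits are the images of the
lines `{s} × ℤ`, each meeting `Σ` exactly in `s`.
-/

open Equiv Cardinal Function

namespace Subgroup

variable {G H : Type*} [Group G] [Group H] {K : Subgroup (G × H)} {s : Set (G × H)}

theorem exists_snd_mem_closure_image (hs : s ⊆ K) {x : G} (hx : x ∈ closure (Prod.fst '' s)) :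
    ∃ y ∈ closure (Prod.snd '' s), (x, y) ∈ K := by
  rw [← MonoidHom.coe_fst, ← MonoidHom.map_closure] at hx
  obtain ⟨p, hp, rfl⟩ := mem_map.1 hx
  refine ⟨p.2, ?_, (closure_le K).2 hs hp⟩
  rw [← MonoidHom.coe_snd, ← MonoidHom.map_closure]
  exact mem_map_of_mem _ hp

theorem exists_fst_mem_closure_image (hs : s ⊆ K) {y : H} (hy : y ∈ closure (Prod.snd '' s)) :
    ∃ x ∈ closure (Prod.fst '' s), (x, y) ∈ K := by
  rw [← MonoidHom.coe_snd, ← MonoidHom.map_closure] at hy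
  obtain ⟨p, hp, rfl⟩ := mem_map.1 hy
  refine ⟨p.1, ?_, (closure_le K).2 hs hp⟩
  rw [← MonoidHom.coe_fst, ← MonoidHom.map_closure]
  exact mem_map_of_mem _ hp

end Subgroup

theorem exists_equiv_extend_of_injective {κ α β : Type*} [Finite κ] [Countable α] [Infinite α]
    [Countable β] [Infinite β] {u : κ → α} {v : κ → β} (hu : Injective u) (hv : Injective v) :
    ∃ e : α ≃ β, ∀ k, e (u k) = v k := by
  obtain ⟨e, he⟩ := extend_function_of_lt ((Equiv.ofInjective u hu).symm.toEmbedding.trans ⟨v, hv⟩)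
    ((Set.finite_range u).lt_aleph0.trans_le (aleph0_le_mk α)) nonempty_equiv_of_countable
  exact ⟨e, fun k => by simpa using he ⟨u k, Set.mem_range_self k⟩⟩

namespace Equiv.Perm

def liesOver (ι α : Type*) : Subgroup (Perm (ι × α) × Perm ι) where
  carrier := {p | ∀ x, (p.1 x).1 = p.2 x.1}
  one_mem' _ := rfl
  mul_mem' {p q} hp hq x := (hp (q.1 x)).trans (congrArg p.2 (hq x))
  inv_mem' {p} hp x := p.2.injective <| by
    rw [Prod.fst_inv, Prod.snd_inv, ← hp (p.1⁻¹ x), ← mul_apply, ← mul_apply, mul_inv_cancel,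
      mul_inv_cancel, one_apply, one_apply]

variable {ι α β : Type*}

theorem eq_of_mem_liesOver [Nonempty α] {h : Perm (ι × α)} {u v : Perm ι}
    (hu : (h, u) ∈ liesOver ι α) (hv : (h, v) ∈ liesOver ι α) : u = v :=
  Equiv.ext fun i =>
    (hu (i, Classical.arbitrary α)).symm.trans (hv (i, Classical.arbitrary α))

theorem SameCycle.fst_of_mem_liesOver {h : Perm (ι × α)} {u : Perm ι}
    (hh : (h, u) ∈ liesOver ι α) {x y : ι × α} (hxy : h.SameCycle x y) : u.SameCycle x.1 y.1 := by
  obtain ⟨m, rfl⟩ := hxy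
  exact ⟨m, (zpow_mem hh m x).symm⟩

theorem exists_mem_liesOver [Nonempty α] (h : Perm (ι × α))
    (hh : ∀ x y, (h x).1 = (h y).1 ↔ x.1 = y.1) : ∃ u, (h, u) ∈ liesOver ι α := by
  obtain ⟨a⟩ := ‹Nonempty α›
  refine ⟨⟨fun i => (h (i, a)).1, fun i => (h⁻¹ (i, a)).1, fun i => ?_, fun i => ?_⟩, fun x => ?_⟩
  · exact (hh _ (i, a)).1 (by simp)
  · simpa using (hh ((h⁻¹ (i, a)).1, a) (h⁻¹ (i, a))).2 rfl
  · exact (hh x (x.1, a)).2 rfl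

theorem sameCycle_permCongr (e : α ≃ β) (p : Perm α) {x y : β} :
    (e.permCongr p).SameCycle x y ↔ p.SameCycle (e.symm x) (e.symm y) := by
  refine exists_congr fun m => ?_
  rw [← e.permCongrHom_coe, ← map_zpow, e.permCongrHom_coe, permCongr_apply,
    ← eq_symm_apply]

def shiftInt (β : Type*) : Perm (β × ℤ) := prodCongr (Equiv.refl β) (Equiv.addRight 1)

theorem shiftInt_zpow_apply (m : ℤ) (p : β × ℤ) : (shiftInt β ^ m) p = (p.1, p.2 + m) := by
  induction m using Int.induction_on generalizing p with
  | zero => simp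
  | succ k ih =>
    rw [zpow_add_one, mul_apply, ih]; exact Prod.ext rfl (show p.2 + 1 + _ = _ by ring)
  | pred k ih =>
    rw [zpow_sub_one, mul_apply, ih]; exact Prod.ext rfl (show p.2 - 1 + _ = _ by ring)

theorem sameCycle_shiftInt {p q : β × ℤ} : (shiftInt β).SameCycle p q ↔ p.1 = q.1 := by
  simp only [SameCycle, shiftInt_zpow_apply, Prod.ext_iff]
  exact ⟨fun ⟨m, h, _⟩ => h, fun h => ⟨q.2 - p.2, h, by ring⟩⟩

theorem infinite_setOf_zpow_apply_eq [Finite α] {σ : Perm α} {a b : α} (h : σ.SameCycle a b) :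
    {m : ℤ | (σ ^ m) a = b}.Infinite := by
  obtain ⟨j, hj⟩ := h
  refine Set.infinite_of_injective_forall_mem (f := fun k : ℕ => j + orderOf σ * k)
    (fun k l hkl => ?_) (fun k => ?_)
  · simpa [(orderOf_pos σ).ne'] using hkl
  · simp only [Set.mem_ofPred_eq, zpow_add, zpow_mul, zpow_natCast, pow_orderOf_eq_one, one_pow,
      mul_one, hj]

theorem existsUnique_sameCycle_permCongr_shiftInt {S : Set β} (E : S × ℤ ≃ β)
    (hE : ∀ s, E (s, 0) = s) (x : β) :
    ∃! s, s ∈ S ∧ (E.permCongr (shiftInt S)).SameCycle s x := by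
  have key : ∀ s : S, (E.permCongr (shiftInt S)).SameCycle s x ↔ s = (E.symm x).1 := by
    intro s
    rw [sameCycle_permCongr, sameCycle_shiftInt, ← hE s, symm_apply_apply]
  exact ⟨(E.symm x).1, ⟨Subtype.prop _, (key _).2 rfl⟩,
    fun y ⟨hy, hyx⟩ => congrArg Subtype.val ((key ⟨y, hy⟩).1 hyx)⟩

theorem permCongr_shiftInt_mem_liesOver {σ : Perm ι} {S : Set (ι × α)} (E : S × ℤ ≃ ι × α)
    (hE : ∀ p, (E p).1 = (σ ^ p.2) (p.1 : ι × α).1) :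
    (E.permCongr (shiftInt S), σ) ∈ liesOver ι α := by
  intro x
  obtain ⟨p, rfl⟩ := E.surjective x
  show (E.permCongr (shiftInt S) (E p)).1 = σ (E p).1
  rw [permCongr_apply, symm_apply_apply, hE, hE]
  show (σ ^ (p.2 + 1)) (p.1 : ι × α).1 = σ ((σ ^ p.2) (p.1 : ι × α).1)
  rw [add_comm, zpow_add, zpow_one, mul_apply]

section Construction

variable [Finite ι] [Countable α] [Infinite α] {σ : Perm ι} {S : Set (ι × α)} [Finite S]

theorem exists_fiber_equiv_fixing_zero (hS : ∀ i, ∃ s ∈ S, σ.SameCycle i s.1) (i : ι) :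
    ∃ e : {p : S × ℤ // (σ ^ p.2) (p.1 : ι × α).1 = i} ≃ {x : ι × α // x.1 = i},
      ∀ (s : S) (hs : (s : ι × α).1 = i), e ⟨(s, 0), by simpa using hs⟩ = ⟨s, hs⟩ := by
  obtain ⟨s, hs, hsi⟩ := hS i
  have := (infinite_setOf_zpow_apply_eq hsi.symm).to_subtype
  have : Infinite {p : S × ℤ // (σ ^ p.2) (p.1 : ι × α).1 = i} :=
    Infinite.of_injective (fun m : {m : ℤ | (σ ^ m) s.1 = i} => ⟨(⟨s, hs⟩, m.1), m.2⟩)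
      fun m l h => Subtype.ext (by simpa using h)
  have : Infinite {x : ι × α // x.1 = i} :=
    Infinite.of_injective (fun a => ⟨(i, a), rfl⟩) fun a b h => by simpa using h
  obtain ⟨e, he⟩ := exists_equiv_extend_of_injective
    (u := fun t : {s : S // (s : ι × α).1 = i} =>
      (⟨(t.1, 0), by simpa using t.2⟩ : {p : S × ℤ // (σ ^ p.2) (p.1 : ι × α).1 = i}))
    (v := fun t => (⟨t.1, t.2⟩ : {x : ι × α // x.1 = i}))
    (fun t t' h => Subtype.ext (by simpa using h))
    (fun t t' h => Subtype.ext (Subtype.ext (by simpa using h)))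
  exact ⟨e, fun s hs => he ⟨s, hs⟩⟩

theorem exists_prod_int_equiv (hS : ∀ i, ∃ s ∈ S, σ.SameCycle i s.1) :
    ∃ E : S × ℤ ≃ ι × α, (∀ p, (E p).1 = (σ ^ p.2) (p.1 : ι × α).1) ∧ ∀ s : S, E (s, 0) = s := by
  choose e he using exists_fiber_equiv_fixing_zero hS
  exact ⟨ofFiberEquiv e, ofFiberEquiv_map e, fun s => congrArg Subtype.val (he _ s (by simp))⟩

theorem exists_mem_liesOver_existsUnique_sameCycle (hS : ∀ i, ∃ s ∈ S, σ.SameCycle i s.1) :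
    ∃ g, (g, σ) ∈ liesOver ι α ∧ ∀ x, ∃! s, s ∈ S ∧ g.SameCycle s x := by
  obtain ⟨E, hE₁, hE₂⟩ := exists_prod_int_equiv hS
  exact ⟨_, permCongr_shiftInt_mem_liesOver E hE₁, existsUnique_sameCycle_permCongr_shiftInt E hE₂⟩

end Construction

end Equiv.Perm

open Equiv.Perm

section nKomega

variable {n : ℕ} {u v : Fin n × ℕ}

theorem nKomega_adj : (nKomega n).Adj u v ↔ u ≠ v ∧ u.1 = v.1 := by
  simp [nKomega, eq_comm]

theorem fst_eq_iff_eq_or_nKomega_adj : u.1 = v.1 ↔ u = v ∨ (nKomega n).Adj u v := by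
  rw [nKomega_adj]
  by_cases h : u = v <;> simp [h]

theorem nKomega_iso_fst_eq_iff (g : nKomega n ≃g nKomega n) : (g u).1 = (g v).1 ↔ u.1 = v.1 := by
  rw [fst_eq_iff_eq_or_nKomega_adj, fst_eq_iff_eq_or_nKomega_adj, g.map_rel_iff,
    EmbeddingLike.apply_eq_iff_eq]

theorem nKomega_map_adj_iff {g : Perm (Fin n × ℕ)} {σ : Perm (Fin n)}
    (hg : (g, σ) ∈ liesOver (Fin n) ℕ) : (nKomega n).Adj (g u) (g v) ↔ (nKomega n).Adj u v := by
  rw [nKomega_adj, nKomega_adj, hg u, hg v, σ.injective.eq_iff, g.injective.ne_iff]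

end nKomega

theorem stmt_15_general (n : ℕ) (f : nKomega n ≃g nKomega n)
    (fbar : Equiv.Perm (Fin n)) (hfbar : ∀ x : Fin n × ℕ, (f x).1 = fbar x.1)
    (S : Finset (Fin n × ℕ)) :
    (∃ g : nKomega n ≃g nKomega n,
        (∀ τ : Equiv.Perm (Fin n),
          ∃ h ∈ Subgroup.closure ({f.toEquiv, g.toEquiv} : Set (Equiv.Perm (Fin n × ℕ))),
            ∀ x : Fin n × ℕ, (h x).1 = τ x.1) ∧
        (∀ x, ∃! σ', σ' ∈ S ∧ Equiv.Perm.SameCycle g.toEquiv σ' x)) ↔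
      ∃ σ : Equiv.Perm (Fin n),
        Subgroup.closure ({fbar, σ} : Set (Equiv.Perm (Fin n))) = ⊤ ∧
        ∀ i : Fin n, ∃ v ∈ S, ∃ j : ℤ, v.1 = (σ ^ j) i := by
  have hf : (f.toEquiv, fbar) ∈ liesOver (Fin n) ℕ := hfbar
  constructor
  · rintro ⟨g, hgen, hreps⟩
    obtain ⟨gbar, hg⟩ := exists_mem_liesOver g.toEquiv fun _ _ => nKomega_iso_fst_eq_iff g
    refine ⟨gbar, eq_top_iff.2 fun τ _ => ?_, fun i => ?_⟩
    · obtain ⟨h, hh, hτ⟩ := hgen τ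
      obtain ⟨u, hu, hhu⟩ := Subgroup.exists_snd_mem_closure_image (Set.pair_subset hf hg)
        (by rwa [Set.image_pair])
      rw [Set.image_pair] at hu
      rwa [eq_of_mem_liesOver hτ hhu]
    · obtain ⟨v, ⟨hv, hvi⟩, -⟩ := hreps (i, 0)
      obtain ⟨j, hj⟩ := hvi.symm.fst_of_mem_liesOver hg
      exact ⟨v, hv, j, hj.symm⟩
  · rintro ⟨σ, hσ, hS⟩
    obtain ⟨g, hg, hreps⟩ := exists_mem_liesOver_existsUnique_sameCycle (S := (S : Set _))
      fun i => (hS i).imp fun v ⟨hv, j, hj⟩ => ⟨hv, j, hj.symm⟩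
    refine ⟨⟨g, nKomega_map_adj_iff hg⟩, fun τ => ?_, hreps⟩
    obtain ⟨h, hh, hτ⟩ := Subgroup.exists_fst_mem_closure_image (Set.pair_subset hf hg)
      (by rw [Set.image_pair, hσ]; exact Subgroup.mem_top τ)
    rw [Set.image_pair] at hh
    exact ⟨h, hh, hτ⟩

/-- Let n ≥ 2, f ∈ Aut(nK_ω) with induced permutation f̄ of the
components, and Σ finite.  Then A_{f,Σ} = {g ∈ Aut(nK_ω) : ⟨f̄, ḡ⟩ = S_n and Σ is a
set of orbit representatives of g} is nonempty if and only if there is σ ∈ S_n with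
⟨f̄, σ⟩ = S_n such that for every i, the union ⋃_{j ∈ ℤ} L_{(i)σ^j} meets Σ. -/
theorem stmt_15 (n : ℕ) (hn : 2 ≤ n) (f : nKomega n ≃g nKomega n)
    (fbar : Equiv.Perm (Fin n)) (hfbar : ∀ x : Fin n × ℕ, (f x).1 = fbar x.1)
    (S : Finset (Fin n × ℕ)) :
    (∃ g : nKomega n ≃g nKomega n,
        (∀ τ : Equiv.Perm (Fin n),
          ∃ h ∈ Subgroup.closure ({f.toEquiv, g.toEquiv} : Set (Equiv.Perm (Fin n × ℕ))),
            ∀ x : Fin n × ℕ, (h x).1 = τ x.1) ∧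
        (∀ x, ∃! σ', σ' ∈ S ∧ Equiv.Perm.SameCycle g.toEquiv σ' x)) ↔
      ∃ σ : Equiv.Perm (Fin n),
        Subgroup.closure ({fbar, σ} : Set (Equiv.Perm (Fin n))) = ⊤ ∧
        ∀ i : Fin n, ∃ v ∈ S, ∃ j : ℤ, v.1 = (σ ^ j) i :=
  stmt_15_general n f fbar hfbar S
end

section
/- Let n ≥ 2 and f ∈ Aut(nK_ω). If f is stabilizing, then D_f (the set of g such that ⟨f,g⟩ is dense in Aut(nK_ω)) is not dense in A_f; in particular D_f ∩ A_f is not comeagre in A_f. -/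
/-!
The data witnessing that `f` is stabilizing give a nonempty basic open set `[q] ∩ A_f` of `A_f`.
If `⟨f, g⟩` is dense then, since `Aut(nK_ω)` is transitive on vertices, some `h ∈ ⟨f, g⟩` moves
`x` to a vertex outside `Γ`; so no `g` in that open set lies in `D_f`, and `D_f` is not dense.
Being open in the Polish group `Aut(nK_ω)`, the space `A_f` is Baire, so a comeagre subset of it
would be dense.
-/

open Topology

/-- The pointwise-convergence (permutation) topology on the automorphism group. -/
def autTop {V : Type*} (G : SimpleGraph V) : TopologicalSpace (G ≃g G) :=
  TopologicalSpace.induced (fun g (x : V) => g x)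
    (@Pi.topologicalSpace V (fun _ => V) (fun _ => ⊥))

/-- g ∈ A_f: the induced permutations f̄, ḡ generate the full symmetric group S_n. -/
def AfMem (n : ℕ) (f g : nKomega n ≃g nKomega n) : Prop :=
  ∀ σ : Equiv.Perm (Fin n),
    ∃ h ∈ Subgroup.closure ({f.toEquiv, g.toEquiv} : Set (Equiv.Perm (Fin n × ℕ))),
      ∀ x : Fin n × ℕ, (h x).1 = σ x.1

/-- f is non-stabilizing. -/
def NonStabilizing (n : ℕ) (f : nKomega n ≃g nKomega n) : Prop :=
  ∀ Γ : Set (Fin n × ℕ), Γ ≠ Set.univ → ∀ x ∈ Γ,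
    ∀ (s : Finset (Fin n × ℕ)) (φ : Fin n × ℕ → Fin n × ℕ),
      (∃ g₀ : nKomega n ≃g nKomega n, (∀ z ∈ s, g₀ z = φ z) ∧ AfMem n f g₀) →
      ∃ g : nKomega n ≃g nKomega n, (∀ z ∈ s, g z = φ z) ∧ AfMem n f g ∧
        ∃ h ∈ Subgroup.closure ({f.toEquiv, g.toEquiv} : Set (Equiv.Perm (Fin n × ℕ))),
          h x ∉ Γ

namespace SimpleGraph

variable {V : Type*} (G : SimpleGraph V)

theorem isOpen_autTop_setOf_apply_mem (x : V) (t : Set V) :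
    IsOpen[autTop G] {g : G ≃g G | g x ∈ t} := by
  let : TopologicalSpace V := ⊥
  have : DiscreteTopology V := ⟨rfl⟩
  let := autTop G
  exact (isOpen_discrete t).preimage ((continuous_apply x).comp continuous_induced_dom)

theorem isOpen_autTop_setOf_forall_apply_eq (s : Finset V) (φ : V → V) :
    IsOpen[autTop G] {g : G ≃g G | ∀ z ∈ s, g z = φ z} := by
  let := autTop G
  simpa only [Set.ofPred_forall, Set.mem_singleton_iff] using
    isOpen_biInter_finset fun z _ => isOpen_autTop_setOf_apply_mem G z {φ z}

theorem range_coe_prod_coe_symm :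
    Set.range (fun g : G ≃g G => ((g : V → V), (g.symm : V → V))) =
      {pq | (∀ x, pq.2 (pq.1 x) = x ∧ pq.1 (pq.2 x) = x) ∧
        ∀ x y, (G.Adj (pq.1 x) (pq.1 y) ↔ G.Adj x y)} := by
  ext ⟨p, q⟩
  constructor
  · rintro ⟨g, hg⟩
    cases hg
    exact ⟨fun x => ⟨g.symm_apply_apply x, g.apply_symm_apply x⟩, fun x y => g.map_rel_iff⟩
  · rintro ⟨hinv, hadj⟩
    let g : G ≃g G :=
      { toFun := p
        invFun := q
        left_inv x := (hinv x).1
        right_inv x := (hinv x).2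
        map_rel_iff' := hadj _ _ }
    exact ⟨g, rfl⟩

theorem isClosed_range_coe_prod_coe_symm [TopologicalSpace V] [DiscreteTopology V] :
    IsClosed (Set.range fun g : G ≃g G => ((g : V → V), (g.symm : V → V))) := by
  have continuous_eval : Continuous fun p : (V → V) × V => p.1 p.2 :=
    continuous_prod_of_discrete_right.2 continuous_apply
  have continuous_apply_apply (x : V) : Continuous fun pq : (V → V) × (V → V) => pq.2 (pq.1 x) :=
    continuous_eval.comp (continuous_snd.prodMk ((continuous_apply x).comp continuous_fst))
  rw [range_coe_prod_coe_symm]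
  simp only [Set.ofPred_forall, Set.ofPred_and]
  refine (isClosed_iInter fun x => ?_).inter (isClosed_iInter fun x => isClosed_iInter fun y => ?_)
  · exact (isClosed_eq (continuous_apply_apply x) continuous_const).inter
      (isClosed_eq ((continuous_apply_apply x).comp continuous_swap) continuous_const)
  · exact (isClosed_discrete {v : V × V | G.Adj v.1 v.2 ↔ G.Adj x y}).preimage
      (f := fun pq : (V → V) × (V → V) => (pq.1 x, pq.1 y)) (by fun_prop)

theorem isCompletelyMetrizableSpace_autTop [Countable V] :
    @TopologicalSpace.IsCompletelyMetrizableSpace (G ≃g G) (autTop G) := by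
  let : TopologicalSpace V := ⊥
  have : DiscreteTopology V := ⟨rfl⟩
  let := autTop G
  have continuous_symm : Continuous fun g : G ≃g G => (g.symm : V → V) := by
    refine continuous_pi fun x => continuous_discrete_rng.2 fun y => ?_
    convert isOpen_autTop_setOf_apply_mem G y {x} using 1
    ext g
    simp only [Set.mem_preimage, Set.mem_singleton_iff, Set.mem_ofPred_eq, RelIso.symm_apply_eq]
    exact eq_comm
  have he : IsClosedEmbedding fun g : G ≃g G => ((g : V → V), (g.symm : V → V)) :=
    ⟨⟨.of_comp (continuous_induced_dom.prodMk continuous_symm) continuous_fst ⟨rfl⟩,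
      fun g g' h => DFunLike.coe_injective (congrArg Prod.fst h)⟩,
      isClosed_range_coe_prod_coe_symm G⟩
  exact he.IsCompletelyMetrizableSpace

end SimpleGraph

namespace nKomega

variable {n : ℕ}

theorem fst_apply_eq_of_fst_eq (g : nKomega n ≃g nKomega n) {x y : Fin n × ℕ}
    (hxy : x.1 = y.1) : (g x).1 = (g y).1 := by
  obtain rfl | hne := eq_or_ne x y
  · rfl
  have hadj : (nKomega n).Adj (g x) (g y) :=
    g.map_rel_iff.2 (by simp [nKomega, SimpleGraph.fromRel_adj, hne, hxy])
  simp only [nKomega, SimpleGraph.fromRel_adj] at hadj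
  exact hadj.2.elim id Eq.symm

/-- The paper's `g ↦ ḡ`: the permutation of the components induced by an automorphism. -/
def componentPerm : (nKomega n ≃g nKomega n) →* Equiv.Perm (Fin n) where
  toFun g :=
    { toFun i := (g (i, 0)).1
      invFun i := (g⁻¹ (i, 0)).1
      left_inv i :=
        (fst_apply_eq_of_fst_eq g⁻¹ (x := ((g (i, 0)).1, 0)) (y := g (i, 0)) rfl).trans
          (congrArg Prod.fst (g.inv_apply_self _))
      right_inv i :=
        (fst_apply_eq_of_fst_eq g (x := ((g⁻¹ (i, 0)).1, 0)) (y := g⁻¹ (i, 0)) rfl).trans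
          (congrArg Prod.fst (g.apply_inv_self _)) }
  map_one' := rfl
  map_mul' g h := Equiv.ext fun i => fst_apply_eq_of_fst_eq g (x := h (i, 0)) rfl

theorem componentPerm_apply (g : nKomega n ≃g nKomega n) (i : Fin n) :
    componentPerm g i = (g (i, 0)).1 :=
  rfl

theorem componentPerm_apply_fst (g : nKomega n ≃g nKomega n) (x : Fin n × ℕ) :
    componentPerm g x.1 = (g x).1 :=
  fst_apply_eq_of_fst_eq g (x := (x.1, 0)) (y := x) rfl

theorem afMem_iff_closure_componentPerm_eq_top (f g : nKomega n ≃g nKomega n) :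
    AfMem n f g ↔
      Subgroup.closure ({componentPerm f, componentPerm g} : Set (Equiv.Perm (Fin n))) = ⊤ := by
  have closure_toEquiv : Subgroup.closure ({f.toEquiv, g.toEquiv} : Set (Equiv.Perm _)) =
      (Subgroup.closure {f, g}).map (MulAction.toPermHom (nKomega n ≃g nKomega n) _) := by
    rw [MonoidHom.map_closure, Set.image_pair]
    rfl
  rw [← Set.image_pair, ← MonoidHom.map_closure, Subgroup.eq_top_iff']
  refine forall_congr' fun σ => ⟨?_, ?_⟩
  · rintro ⟨_, hh, hσ⟩
    rw [closure_toEquiv] at hh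
    obtain ⟨h, hh, rfl⟩ := hh
    exact ⟨h, hh, Equiv.ext fun i => (componentPerm_apply_fst h (i, 0)).trans (hσ (i, 0))⟩
  · rintro ⟨h, hh, rfl⟩
    exact ⟨h.toEquiv, closure_toEquiv ▸ ⟨h, hh, rfl⟩,
      fun x => (componentPerm_apply_fst h x).symm⟩

theorem isOpen_setOf_afMem (f : nKomega n ≃g nKomega n) :
    IsOpen[autTop (nKomega n)] {g | AfMem n f g} := by
  let := autTop (nKomega n)
  have hA : {g | AfMem n f g} = ⋃ τ ∈ {τ | Subgroup.closure {componentPerm f, τ} = ⊤},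
      ⋂ i, {g : nKomega n ≃g nKomega n | g (i, 0) ∈ Prod.fst ⁻¹' {τ i}} := by
    ext g
    simp only [Set.mem_ofPred_eq, afMem_iff_closure_componentPerm_eq_top, Set.mem_iUnion,
      Set.mem_iInter, Set.mem_preimage, Set.mem_singleton_iff, exists_prop]
    constructor
    · exact fun hg => ⟨componentPerm g, hg, fun i => (componentPerm_apply g i).symm⟩
    · rintro ⟨τ, hτ, hg⟩
      rwa [show componentPerm g = τ from Equiv.ext fun i => (componentPerm_apply g i).trans (hg i)]
  rw [hA]
  exact isOpen_biUnion fun τ _ => isOpen_iInter_of_finite fun i =>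
    SimpleGraph.isOpen_autTop_setOf_apply_mem _ _ _

theorem baireSpace_afMem (f : nKomega n ≃g nKomega n) :
    letI := autTop (nKomega n)
    BaireSpace {g : nKomega n ≃g nKomega n // AfMem n f g} :=
  letI := autTop (nKomega n)
  haveI := (nKomega n).isCompletelyMetrizableSpace_autTop
  (isOpen_setOf_afMem f).baireSpace

theorem exists_apply_eq (x y : Fin n × ℕ) : ∃ g : nKomega n ≃g nKomega n, g x = y :=
  ⟨{ toEquiv := (Equiv.swap x.1 y.1).prodCongr (Equiv.swap x.2 y.2)
     map_rel_iff' := by simp [nKomega, SimpleGraph.fromRel_adj, Prod.ext_iff] },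
   by simp [Prod.ext_iff]⟩

end nKomega

theorem stmt_16_general (n : ℕ) (f : nKomega n ≃g nKomega n)
    (hstab : ¬ NonStabilizing n f) :
    letI := autTop (nKomega n)
    ¬ Dense {g : {g : nKomega n ≃g nKomega n // AfMem n f g} |
        Dense {h : nKomega n ≃g nKomega n |
          h.toEquiv ∈ Subgroup.closure
            ({f.toEquiv, g.1.toEquiv} : Set (Equiv.Perm (Fin n × ℕ)))}} ∧
      {g : {g : nKomega n ≃g nKomega n // AfMem n f g} |
        Dense {h : nKomega n ≃g nKomega n |
          h.toEquiv ∈ Subgroup.closure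
            ({f.toEquiv, g.1.toEquiv} : Set (Equiv.Perm (Fin n × ℕ)))}} ∉
        residual {g : nKomega n ≃g nKomega n // AfMem n f g} := by
  let := autTop (nKomega n)
  have := nKomega.baireSpace_afMem f
  simp only [NonStabilizing, not_forall, not_exists, not_and, not_not, exists_prop] at hstab
  obtain ⟨Γ, hΓ, x, -, s, φ, ⟨g₀, hg₀s, hg₀⟩, hΓ_stable⟩ := hstab
  obtain ⟨y, hy⟩ := (Set.ne_univ_iff_exists_notMem Γ).1 hΓ
  have not_dense : ¬ Dense {g : {g : nKomega n ≃g nKomega n // AfMem n f g} |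
      Dense {h : nKomega n ≃g nKomega n | h.toEquiv ∈ Subgroup.closure
        ({f.toEquiv, g.1.toEquiv} : Set (Equiv.Perm (Fin n × ℕ)))}} := by
    intro hD
    obtain ⟨g, hg, hgs⟩ := hD.exists_mem_open
      ((SimpleGraph.isOpen_autTop_setOf_forall_apply_eq _ s φ).preimage continuous_subtype_val)
      ⟨⟨g₀, hg₀⟩, hg₀s⟩
    obtain ⟨h, hh, rfl⟩ := hg.exists_mem_open
      (SimpleGraph.isOpen_autTop_setOf_apply_mem _ x {y}) (nKomega.exists_apply_eq x y)
    exact hy (hΓ_stable g.1 hgs g.2 h.toEquiv hh)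
  exact ⟨not_dense, fun hres => not_dense (dense_of_mem_residual hres)⟩

/-- Let n ≥ 2 and f ∈ Aut(nK_ω).  If f is stabilizing, then D_f (the
set of g with ⟨f,g⟩ dense in Aut(nK_ω)) is not dense in A_f; in particular D_f ∩ A_f
is not comeagre in A_f. -/
theorem stmt_16 (n : ℕ) (hn : 2 ≤ n) (f : nKomega n ≃g nKomega n)
    (hstab : ¬ NonStabilizing n f) :
    letI := autTop (nKomega n)
    ¬ Dense {g : {g : nKomega n ≃g nKomega n // AfMem n f g} |
        Dense {h : nKomega n ≃g nKomega n |
          h.toEquiv ∈ Subgroup.closure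
            ({f.toEquiv, g.1.toEquiv} : Set (Equiv.Perm (Fin n × ℕ)))}} ∧
      {g : {g : nKomega n ≃g nKomega n // AfMem n f g} |
        Dense {h : nKomega n ≃g nKomega n |
          h.toEquiv ∈ Subgroup.closure
            ({f.toEquiv, g.1.toEquiv} : Set (Equiv.Perm (Fin n × ℕ)))}} ∉
        residual {g : nKomega n ≃g nKomega n // AfMem n f g} :=
  stmt_16_general n f hstab
end

section
/- Let Γ be a graph, f ∈ Aut(Γ), and S ⊆ Aut(Γ) a subspace such that every finite partial isomorphism with an extension in S has an extension in S with only finitely many orbits. If for every finite Σ ⊆ Γ the set D_f ∩ S_Σ is dense in S_Σ, then D_f ∩ S is comeagre in S, where S_Σ = {g ∈ S : Σ is a set of orbit representatives of g}. -/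
open TopologicalSpace

theorem FreeGroup.continuous_lift_apply {Y ι X : Type*} [TopologicalSpace Y] [Group X]
    [TopologicalSpace X] [IsTopologicalGroup X] {F : Y → ι → X}
    (hF : ∀ i, Continuous fun y => F y i) (w : FreeGroup ι) :
    Continuous fun y => FreeGroup.lift (F y) w := by
  induction w using FreeGroup.induction_on with
  | C1 => simp only [_root_.map_one]; exact continuous_const
  | of i => simp only [lift_apply_of]; exact hF i
  | inv_of i _ => simp only [_root_.map_inv, lift_apply_of]; exact (hF i).inv
  | mul w₁ w₂ h₁ h₂ => simp only [_root_.map_mul]; exact h₁.mul h₂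

section TopologicalGroup

variable {X : Type*} [Group X] [TopologicalSpace X] [IsTopologicalGroup X]

theorem isOpen_setOf_inter_closure_pair_nonempty (f : X) {o : Set X} (ho : IsOpen o) :
    IsOpen {g : X | (o ∩ Subgroup.closure {f, g}).Nonempty} := by
  have hwords : {g : X | (o ∩ Subgroup.closure {f, g}).Nonempty} =
      ⋃ w : FreeGroup (Fin 2), (fun g => FreeGroup.lift ![f, g] w) ⁻¹' o := by
    ext g
    rw [Set.mem_ofPred, ← Matrix.range_cons_cons_empty f g ![], ← FreeGroup.range_lift_eq_closure]
    simp [Set.Nonempty]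
  rw [hwords]
  refine isOpen_iUnion fun w => ho.preimage (FreeGroup.continuous_lift_apply (fun i => ?_) w)
  fin_cases i
  exacts [continuous_const, continuous_id]

theorem isGδ_setOf_dense_closure_pair [SecondCountableTopology X] (f : X) :
    IsGδ {g : X | Dense (Subgroup.closure {f, g} : Set X)} := by
  obtain ⟨B, hBc, hBne, hB⟩ := exists_countable_basis X
  have hbasic : {g : X | Dense (Subgroup.closure {f, g} : Set X)} =
      ⋂ o ∈ B, {g : X | (o ∩ Subgroup.closure {f, g}).Nonempty} := by
    ext g
    simp only [Set.mem_ofPred, Set.mem_iInter, hB.dense_iff]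
    refine forall₂_congr fun o ho => ⟨fun h => h ?_, fun h _ => h⟩
    exact Set.nonempty_iff_ne_empty.2 (ne_of_mem_of_not_mem ho hBne)
  rw [hbasic]
  exact .biInter_of_isOpen hBc fun o ho => isOpen_setOf_inter_closure_pair_nonempty f (hB.isOpen ho)

end TopologicalGroup

theorem Setoid.exists_finset_forall_existsUnique {α : Type*} (r : Setoid α)
    (h : {O : Set α | ∃ x, O = {y | r x y}}.Finite) :
    ∃ Sig : Finset α, ∀ x, ∃! σ, σ ∈ Sig ∧ r σ x := by
  have hclasses : {O : Set α | ∃ x, O = {y | r x y}} = r.classes := by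
    ext O
    simp only [Set.mem_ofPred, Setoid.classes, Setoid.comm' r]
  have : Finite (Quotient r) := by
    rw [hclasses] at h
    exact (r.quotientEquivClasses).finite_iff.2 h.to_subtype
  refine ⟨(Set.range (Quotient.out : Quotient r → α)).toFinite.toFinset, fun x => ?_⟩
  refine ⟨(⟦x⟧ : Quotient r).out, ⟨by simp, Quotient.mk_out x⟩, ?_⟩
  rintro _ ⟨hσ, hσx⟩
  obtain ⟨c, rfl⟩ := (Set.Finite.mem_toFinset _).1 hσ
  rw [← Quotient.sound hσx, Quotient.out_eq]

def RelIso.toPermHom {α : Type*} (r : α → α → Prop) : (r ≃r r) →* Equiv.Perm α where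
  toFun := RelIso.toEquiv
  map_one' := rfl
  map_mul' _ _ := rfl

theorem RelIso.toEquiv_mem_closure_pair_iff {α : Type*} {r : α → α → Prop} {f g h : r ≃r r} :
    h.toEquiv ∈ Subgroup.closure {f.toEquiv, g.toEquiv} ↔ h ∈ Subgroup.closure {f, g} := by
  rw [← Subgroup.mem_map_iff_mem (f := toPermHom r) toEquiv_injective, MonoidHom.map_closure,
    Set.image_pair]
  rfl

namespace SimpleGraph

variable {V : Type*} {G : SimpleGraph V}

attribute [local instance] autTop

theorem continuous_autTop_iff {Y : Type*} [TopologicalSpace Y] {F : Y → G ≃g G} :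
    Continuous F ↔ ∀ x y, IsOpen {p | F p x = y} := by
  let _ : TopologicalSpace V := ⊥
  have : DiscreteTopology V := ⟨rfl⟩
  unfold autTop
  rw [continuous_induced_rng, continuous_pi_iff]
  simp only [continuous_discrete_rng]
  rfl

theorem isOpen_setOf_apply_eq (x y : V) : IsOpen {g : G ≃g G | g x = y} :=
  continuous_autTop_iff.1 continuous_id x y

instance : IsTopologicalGroup (G ≃g G) where
  continuous_mul := continuous_autTop_iff.2 fun x y => by
    have hcomp : {p : (G ≃g G) × (G ≃g G) | (p.1 * p.2) x = y} =
        ⋃ c, Prod.snd ⁻¹' {h | h x = c} ∩ Prod.fst ⁻¹' {g | g c = y} := by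
      ext p
      simp [RelIso.mul_apply]
    rw [hcomp]
    exact isOpen_iUnion fun c => ((isOpen_setOf_apply_eq x c).preimage continuous_snd).inter
      ((isOpen_setOf_apply_eq c y).preimage continuous_fst)
  continuous_inv := continuous_autTop_iff.2 fun x y => by
    have hinv : {g : G ≃g G | g⁻¹ x = y} = {g | g y = x} := by
      ext g
      exact g.symm_apply_eq.trans eq_comm
    rw [hinv]
    exact isOpen_setOf_apply_eq y x

instance [Countable V] : SecondCountableTopology (G ≃g G) := by
  let _ : TopologicalSpace V := ⊥
  have : DiscreteTopology V := ⟨rfl⟩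
  exact secondCountableTopology_induced _ _ _

theorem exists_finset_setOf_eqOn_subset {W : Set (G ≃g G)} (hW : IsOpen W) {g₀ : G ≃g G}
    (hg₀ : g₀ ∈ W) : ∃ s : Finset V, {g : G ≃g G | Set.EqOn g g₀ s} ⊆ W := by
  let _ : TopologicalSpace V := ⊥
  obtain ⟨t, ht, rfl⟩ := isOpen_induced_iff.1 hW
  obtain ⟨I, u, hu, hIu⟩ := isOpen_pi_iff.1 ht _ hg₀
  refine ⟨I, fun g hg => hIu fun x hx => ?_⟩
  simpa only [hg hx] using (hu x hx).2

theorem dense_subtype_setOf_dense_closure_pair {f : G ≃g G} {S : Set (G ≃g G)}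
    (hext : ∀ (s : Finset V) (φ : V → V),
      (∃ g ∈ S, ∀ z ∈ s, g z = φ z) →
      ∃ g ∈ S, (∀ z ∈ s, g z = φ z) ∧
        {O : Set V | ∃ x, O = {y | Equiv.Perm.SameCycle g.toEquiv x y}}.Finite)
    (hdense : ∀ Sig : Finset V,
      Dense {g : {g : G ≃g G // g ∈ S ∧ ∀ x, ∃! σ, σ ∈ Sig ∧ Equiv.Perm.SameCycle g.toEquiv σ x} |
        Dense (Subgroup.closure {f, g.1} : Set (G ≃g G))}) :
    Dense {g : S | Dense (Subgroup.closure {f, g.1} : Set (G ≃g G))} := by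
  refine dense_iff_inter_open.2 fun W hW ⟨g₀, hg₀⟩ => ?_
  obtain ⟨W', hW', rfl⟩ := isOpen_induced_iff.1 hW
  obtain ⟨s, hs⟩ := exists_finset_setOf_eqOn_subset hW' hg₀
  obtain ⟨g₁, hg₁S, hg₁s, hfin⟩ := hext s g₀ ⟨g₀, g₀.2, fun _ _ => rfl⟩
  obtain ⟨Sig, hSig⟩ :=
    (Equiv.Perm.SameCycle.setoid g₁.toEquiv).exists_finset_forall_existsUnique hfin
  obtain ⟨g₂, hg₂D, hg₂W⟩ := (hdense Sig).exists_mem_open (hW'.preimage continuous_subtype_val)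
    ⟨⟨g₁, hg₁S, hSig⟩, hs hg₁s⟩
  exact ⟨⟨g₂.1, g₂.2.1⟩, hg₂W, hg₂D⟩

end SimpleGraph

/-- Let Γ be a (countable) graph, f ∈ Aut(Γ), and S ⊆ Aut(Γ) such that
every finite partial isomorphism with an extension in S has an extension in S with
only finitely many orbits.  If for every finite Σ ⊆ Γ the set D_f ∩ S_Σ is dense in
S_Σ (where S_Σ is the set of g ∈ S having Σ as a set of orbit representatives and
D_f is the set of g with ⟨f,g⟩ dense in Aut(Γ)), then D_f ∩ S is comeagre in S. -/
theorem stmt_18 {V : Type*} [Countable V] (G : SimpleGraph V) (f : G ≃g G)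
    (S : Set (G ≃g G))
    (hext : ∀ (s : Finset V) (φ : V → V),
      (∃ g ∈ S, ∀ z ∈ s, g z = φ z) →
      ∃ g ∈ S, (∀ z ∈ s, g z = φ z) ∧
        {O : Set V | ∃ x, O = {y | Equiv.Perm.SameCycle g.toEquiv x y}}.Finite)
    (hdense : letI := autTop G;
      ∀ Sig : Finset V,
        Dense {g : {g : G ≃g G // g ∈ S ∧
            ∀ x : V, ∃! σ, σ ∈ Sig ∧ Equiv.Perm.SameCycle g.toEquiv σ x} |
          Dense {h : G ≃g G | h.toEquiv ∈ Subgroup.closure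
            ({f.toEquiv, g.1.toEquiv} : Set (Equiv.Perm V))}}) :
    letI := autTop G
    {g : S | Dense {h : G ≃g G | h.toEquiv ∈ Subgroup.closure
        ({f.toEquiv, g.1.toEquiv} : Set (Equiv.Perm V))}} ∈ residual S := by
  letI := autTop G
  simp only [RelIso.toEquiv_mem_closure_pair_iff] at hdense ⊢
  exact residual_of_dense_Gδ ((isGδ_setOf_dense_closure_pair f).preimage
    continuous_subtype_val) (SimpleGraph.dense_subtype_setOf_dense_closure_pair hext hdense)
end

section
/- Let n ≥ 3 and let P be the set of isomorphisms p between finite induced subgraphs of the universal K_n-free graph H(n) such that dom(p) ∩ ran(p) = ∅ and there are no edges between dom(p) and ran(p). Then for f ∈ Aut(H(n)), the set of g ∈ I(H(n)) such that ⟨f,g⟩ is dense in Aut(H(n)) equals the intersection over all p ∈ P of the sets {g ∈ I(H(n)) : some element of ⟨f,g⟩ extends p}. -/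
/-!
A subgroup `H` of `Aut G` is dense iff every automorphism `x` agrees with an element of `H` on
every finite set `F`. Membership of `g` in every set indexed by `P` gives this only when `x` moves
`F` far from itself (disjointly, with no edges in between). By the extension property and a
back-and-forth argument some automorphism `c` moves `F` far from `F ∪ x F`. Then `x = (x c⁻¹) c`
on `F`, and both `c` on `F` and `x c⁻¹` on `c F` are far moves, so `H` matches both factors.
-/

namespace SimpleGraph

variable {V : Type*} {G : SimpleGraph V} {n : ℕ}

def IsPartialIso (G : SimpleGraph V) (S : Set (V × V)) : Prop :=
  ∀ r ∈ S, ∀ r' ∈ S, (r.1 = r'.1 ↔ r.2 = r'.2) ∧ (G.Adj r.1 r'.1 ↔ G.Adj r.2 r'.2)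

namespace IsPartialIso

variable {S T : Set (V × V)}

theorem mono (h : G.IsPartialIso T) (hST : S ⊆ T) : G.IsPartialIso S :=
  fun r hr r' hr' => h r (hST hr) r' (hST hr')

theorem image_swap (h : G.IsPartialIso S) : G.IsPartialIso (Prod.swap '' S) := by
  rintro _ ⟨r, hr, rfl⟩ _ ⟨r', hr', rfl⟩
  exact ⟨(h r hr r' hr').1.symm, (h r hr r' hr').2.symm⟩

theorem insert_of_forall (h : G.IsPartialIso S) {v w : V}
    (hvw : ∀ r ∈ S, (v = r.1 ↔ w = r.2) ∧ (G.Adj v r.1 ↔ G.Adj w r.2)) :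
    G.IsPartialIso (insert (v, w) S) := by
  rintro r (rfl | hr) r' (rfl | hr')
  · simp
  · exact hvw r' hr'
  · exact ⟨eq_comm.trans ((hvw r hr).1.trans eq_comm), adj_comm G _ _ |>.trans
      ((hvw r hr).2.trans (adj_comm G _ _))⟩
  · exact h r hr r' hr'

theorem isNClique_image_fst [DecidableEq V] {q : Finset (V × V)} {k : ℕ}
    (h : G.IsPartialIso ↑q) (hq : G.IsNClique k (q.image Prod.snd)) :
    G.IsNClique k (q.image Prod.fst) := by
  have hfst : Set.InjOn Prod.fst (q : Set (V × V)) := fun r hr r' hr' he =>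
    Prod.ext he ((h r hr r' hr').1.1 he)
  have hsnd : Set.InjOn Prod.snd (q : Set (V × V)) := fun r hr r' hr' he =>
    Prod.ext ((h r hr r' hr').1.2 he) he
  refine ⟨?_, ?_⟩
  · rw [Finset.coe_image]
    rintro _ ⟨r, hr, rfl⟩ _ ⟨r', hr', rfl⟩ hne
    have hne' : r.2 ≠ r'.2 := fun he => hne ((h r hr r' hr').1.2 he)
    exact (h r hr r' hr').2.2 <| hq.1 (Finset.mem_image_of_mem _ hr)
      (Finset.mem_image_of_mem _ hr') hne'
  · rw [Finset.card_image_of_injOn hfst, ← hq.2, Finset.card_image_of_injOn hsnd]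

theorem cliqueFreeOn_image_snd (h : G.IsPartialIso S) (hfree : G.CliqueFree n) (v : V) :
    G.CliqueFreeOn (Prod.snd '' {r ∈ S | G.Adj v r.1}) (n - 1) := by
  classical
  obtain _ | n := n
  · exact absurd hfree not_cliqueFree_zero
  intro t ht hclique
  obtain ⟨q, hqS, rfl⟩ := Finset.subset_set_image_iff.1 ht
  refine CliqueFreeOn.of_succ G hfree.cliqueFreeOn (Set.mem_univ v) ?_
    ((h.mono fun r hr => (hqS hr).1).isNClique_image_fst hclique)
  rw [Finset.coe_image]
  rintro _ ⟨r, hr, rfl⟩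
  exact ⟨trivial, (hqS hr).2⟩

theorem exists_insert_right [DecidableEq V] {p : Finset (V × V)} (h : G.IsPartialIso ↑p)
    (hfree : G.CliqueFree n) (halice : AliceProp G n) {v : V} (hv : ∀ r ∈ p, r.1 ≠ v)
    {A : Finset V} (hA : ∀ r ∈ p, r.2 ∉ A) :
    ∃ w, G.IsPartialIso ↑(insert (v, w) p) ∧ w ∉ A ∧ ∀ a ∈ A, ¬ G.Adj w a := by
  classical
  -- `w` must be adjacent exactly to the images `U` of the neighbours of `v`, and to nothing
  -- else in the range of `p` or in `A`; the extension property provides it.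
  set U := (p.filter (G.Adj v ·.1)).image Prod.snd
  set W := (p.image Prod.snd \ U) ∪ A
  have hUW : Disjoint U W := by
    refine Finset.disjoint_union_right.2 ⟨Finset.disjoint_sdiff, Finset.disjoint_left.2 ?_⟩
    simp only [U, Finset.mem_image, Finset.mem_filter]
    rintro _ ⟨r, ⟨hr, -⟩, rfl⟩
    exact hA r hr
  have hU : (G.induce (U : Set V)).CliqueFree (n - 1) := by
    rw [cliqueFree_induce_iff, Finset.coe_image, Finset.coe_filter]
    exact h.cliqueFreeOn_image_snd hfree v
  obtain ⟨w, hwU, hwW, hadjU, hnadjW⟩ := halice U W hUW hU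
  refine ⟨w, ?_, fun hwA => hwW (Finset.mem_union_right _ hwA),
    fun a ha => hnadjW a (Finset.mem_union_right _ ha)⟩
  rw [Finset.coe_insert]
  refine h.insert_of_forall fun r hr => ?_
  by_cases hadj : G.Adj v r.1
  · have hrU : r.2 ∈ U := Finset.mem_image_of_mem _ (Finset.mem_filter.2 ⟨hr, hadj⟩)
    exact ⟨iff_of_false (hv r hr).symm (ne_of_mem_of_not_mem hrU hwU).symm,
      iff_of_true hadj (hadjU _ hrU)⟩
  · have hrW : r.2 ∈ W := by
      refine Finset.mem_union_left _ (Finset.mem_sdiff.2 ⟨Finset.mem_image_of_mem _ hr, ?_⟩)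
      simp only [U, Finset.mem_image, Finset.mem_filter]
      rintro ⟨r', ⟨hr', hadj'⟩, he⟩
      exact hadj ((h r' hr' r hr).1.2 he ▸ hadj')
    exact ⟨iff_of_false (hv r hr).symm (ne_of_mem_of_not_mem hrW hwW).symm,
      iff_of_false hadj (hnadjW _ hrW)⟩

theorem exists_insert_left [DecidableEq V] {p : Finset (V × V)} (h : G.IsPartialIso ↑p)
    (hfree : G.CliqueFree n) (halice : AliceProp G n) {u : V} (hu : ∀ r ∈ p, r.2 ≠ u) :
    ∃ v, G.IsPartialIso ↑(insert (v, u) p) := by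
  have h' : G.IsPartialIso ↑(p.image Prod.swap) := by
    rw [Finset.coe_image]
    exact h.image_swap
  obtain ⟨v, hv, -⟩ := h'.exists_insert_right hfree halice (v := u) (A := ∅)
    (fun _ hr => by obtain ⟨r, hrp, rfl⟩ := Finset.mem_image.1 hr; exact hu r hrp) (by simp)
  refine ⟨v, ?_⟩
  simpa [Set.image_insert_eq, Set.image_image] using hv.image_swap

theorem exists_iso (h : G.IsPartialIso S) (hfst : ∀ a, ∃ b, (a, b) ∈ S)
    (hsnd : ∀ b, ∃ a, (a, b) ∈ S) : ∃ g : G ≃g G, ∀ r ∈ S, g r.1 = r.2 := by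
  choose F hF using hfst
  have hF_eq : ∀ r ∈ S, F r.1 = r.2 := fun r hr => (h _ (hF r.1) r hr).1.1 rfl
  have hinj : Function.Injective F := fun a a' he =>
    (h _ (hF a) _ (hF a')).1.2 he
  have hsurj : Function.Surjective F := fun b => by
    obtain ⟨a, ha⟩ := hsnd b
    exact ⟨a, hF_eq _ ha⟩
  exact ⟨⟨Equiv.ofBijective F ⟨hinj, hsurj⟩, fun {a a'} => (h _ (hF a) _ (hF a')).2.symm⟩,
    hF_eq⟩

end IsPartialIso

abbrev FinPartialIso (G : SimpleGraph V) : Type _ :=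
  {p : Finset (V × V) // G.IsPartialIso ↑p}

theorem isCofinal_exists_mem_fst (hfree : G.CliqueFree n) (halice : AliceProp G n) (v : V) :
    IsCofinal {p : G.FinPartialIso | ∃ w, (v, w) ∈ p.1} := by
  classical
  intro p
  by_cases hv : ∃ r ∈ p.1, r.1 = v
  · obtain ⟨r, hr, rfl⟩ := hv
    exact ⟨p, ⟨r.2, hr⟩, le_rfl⟩
  push Not at hv
  obtain ⟨w, hw, -⟩ := p.2.exists_insert_right hfree halice hv (A := ∅) (by simp)
  exact ⟨⟨_, hw⟩, ⟨w, Finset.mem_insert_self _ _⟩, Finset.subset_insert _ _⟩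

theorem isCofinal_exists_mem_snd (hfree : G.CliqueFree n) (halice : AliceProp G n) (w : V) :
    IsCofinal {p : G.FinPartialIso | ∃ v, (v, w) ∈ p.1} := by
  classical
  intro p
  by_cases hw : ∃ r ∈ p.1, r.2 = w
  · obtain ⟨r, hr, rfl⟩ := hw
    exact ⟨p, ⟨r.1, hr⟩, le_rfl⟩
  push Not at hw
  obtain ⟨v, hv⟩ := p.2.exists_insert_left hfree halice hw
  exact ⟨⟨_, hv⟩, ⟨v, Finset.mem_insert_self _ _⟩, Finset.subset_insert _ _⟩

theorem IsPartialIso.exists_iso_of_finite [Countable V] (hfree : G.CliqueFree n)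
    (halice : AliceProp G n) {p : Finset (V × V)} (h : G.IsPartialIso ↑p) :
    ∃ g : G ≃g G, ∀ r ∈ p, g r.1 = r.2 := by
  -- A generic ideal (Rasiowa–Sikorski) is a back-and-forth system defined everywhere.
  have := Encodable.ofCountable V
  let D : V ⊕ V → Order.Cofinal G.FinPartialIso :=
    Sum.elim (fun v => ⟨_, isCofinal_exists_mem_fst hfree halice v⟩)
      (fun w => ⟨_, isCofinal_exists_mem_snd hfree halice w⟩)
  let I := Order.idealOfCofinals ⟨p, h⟩ D
  have hS : G.IsPartialIso (⋃ q ∈ I, ↑q.1) := by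
    simp only [IsPartialIso, Set.mem_iUnion₂]
    rintro r ⟨q, hq, hr⟩ r' ⟨q', hq', hr'⟩
    obtain ⟨m, -, hqm, hq'm⟩ := I.directed _ hq _ hq'
    exact m.2 r (hqm hr) r' (hq'm hr')
  have hmeets (i : V ⊕ V) : ∃ q ∈ I, q ∈ (D i).carrier :=
    (Order.cofinal_meets_idealOfCofinals _ D i).imp fun _ hq => ⟨hq.2, hq.1⟩
  obtain ⟨g, hg⟩ := hS.exists_iso
    (fun v => by
      obtain ⟨q, hq, w, hw⟩ := hmeets (.inl v)
      exact ⟨w, Set.mem_biUnion hq hw⟩)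
    (fun w => by
      obtain ⟨q, hq, v, hv⟩ := hmeets (.inr w)
      exact ⟨v, Set.mem_biUnion hq hv⟩)
  exact ⟨g, fun r hr => hg r (Set.mem_biUnion (Order.mem_idealOfCofinals _ D) hr)⟩

theorem exists_isPartialIso_image_fst_eq [DecidableEq V] (hfree : G.CliqueFree n)
    (halice : AliceProp G n) (F T : Finset V) :
    ∃ p : Finset (V × V), G.IsPartialIso ↑p ∧ p.image Prod.fst = F ∧
      ∀ r ∈ p, r.2 ∉ T ∧ ∀ t ∈ T, ¬ G.Adj r.2 t := by
  induction F using Finset.induction_on with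
  | empty => exact ⟨∅, by simp [IsPartialIso], rfl, by simp⟩
  | insert v F hvF ih =>
    obtain ⟨p, hp, hpF, hpT⟩ := ih
    obtain ⟨w, hw, hwT, hwadj⟩ := hp.exists_insert_right hfree halice (v := v) (A := T)
      (fun r hr he => hvF (hpF ▸ he ▸ Finset.mem_image_of_mem _ hr)) (fun r hr => (hpT r hr).1)
    refine ⟨insert (v, w) p, hw, by rw [Finset.image_insert, hpF], ?_⟩
    exact Finset.forall_mem_insert _ _ _ |>.2 ⟨⟨hwT, hwadj⟩, hpT⟩

theorem exists_iso_apply_notMem_not_adj [Countable V] (hfree : G.CliqueFree n)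
    (halice : AliceProp G n) (F T : Finset V) :
    ∃ g : G ≃g G, ∀ v ∈ F, g v ∉ T ∧ ∀ t ∈ T, ¬ G.Adj (g v) t := by
  classical
  obtain ⟨p, hp, hpF, hpT⟩ := exists_isPartialIso_image_fst_eq hfree halice F T
  obtain ⟨g, hg⟩ := hp.exists_iso_of_finite hfree halice
  refine ⟨g, fun v hv => ?_⟩
  obtain ⟨r, hr, rfl⟩ := Finset.mem_image.1 (hpF ▸ hv)
  rw [hg r hr]
  exact hpT r hr

theorem dense_autTop_iff (S : Set (G ≃g G)) :
    (letI := autTop G; Dense S) ↔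
      ∀ (x : G ≃g G) (F : Finset V), ∃ h ∈ S, ∀ v ∈ F, h v = x v := by
  let _ : TopologicalSpace V := ⊥
  have : DiscreteTopology V := ⟨rfl⟩
  let _ := autTop G
  have hnhds (x : G ≃g G) : nhds x = Filter.comap (fun g (v : V) => g v) (nhds (x : V → V)) :=
    nhds_induced _ _
  simp only [Dense, mem_closure_iff_nhds, hnhds, Filter.mem_comap, nhds_pi, nhds_discrete,
    Filter.mem_pi', Filter.mem_pure]
  constructor
  · intro hd x F
    obtain ⟨h, hx, hS⟩ := hd x {h | ∀ v ∈ F, h v = x v}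
      ⟨_, ⟨F, fun v => {x v}, fun _ => rfl, subset_rfl⟩, fun _ hh v hv => hh v hv⟩
    exact ⟨h, hS, hx⟩
  · rintro H x U ⟨t, ⟨F, u, hxu, hFt⟩, htU⟩
    obtain ⟨h, hS, hx⟩ := H x F
    exact ⟨h, htU <| hFt fun v hv => show h v ∈ u v from (hx v hv).symm ▸ hxu v, hS⟩

theorem dense_subgroup_iff_forall_exists_eqOn [Countable V] (hfree : G.CliqueFree n)
    (halice : AliceProp G n) (H : Subgroup (G ≃g G)) :
    (letI := autTop G; Dense (H : Set (G ≃g G))) ↔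
      ∀ (a : G ≃g G) (s : Finset V), Disjoint (s : Set V) (a '' s) →
        (∀ u ∈ s, ∀ v ∈ s, ¬ G.Adj u (a v)) → ∃ h ∈ H, ∀ z ∈ s, h z = a z := by
  classical
  rw [dense_autTop_iff]
  refine ⟨fun hH a s _ _ => hH a s, fun hH x F => ?_⟩
  set T := F ∪ F.image x
  obtain ⟨c, hc⟩ := exists_iso_apply_notMem_not_adj hfree halice F T
  have hxc (v : V) : (x * c⁻¹) (c v) = x v := by rw [RelIso.mul_apply, RelIso.inv_apply_self]
  obtain ⟨h₁, hh₁, eq₁⟩ := hH c F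
    (Set.disjoint_left.2 fun u hu ⟨v, hv, hvu⟩ =>
      (hc v hv).1 (hvu ▸ Finset.mem_union_left _ hu))
    (fun u hu v hv hadj => (hc v hv).2 u (Finset.mem_union_left _ hu) hadj.symm)
  obtain ⟨h₂, hh₂, eq₂⟩ := hH (x * c⁻¹) (F.image c)
    (by
      rw [Finset.coe_image, Set.image_image, Set.disjoint_left]
      rintro _ ⟨u, hu, rfl⟩ ⟨v, hv, hvu⟩
      simp only [hxc] at hvu
      exact (hc u hu).1 (hvu ▸ Finset.mem_union_right _ (Finset.mem_image_of_mem x hv)))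
    (by
      simp only [Finset.mem_image, forall_exists_index, and_imp]
      rintro _ u hu rfl _ v hv rfl
      rw [hxc]
      exact (hc u hu).2 _ (Finset.mem_union_right _ (Finset.mem_image_of_mem x hv)))
  refine ⟨h₂ * h₁, mul_mem hh₂ hh₁, fun v hv => ?_⟩
  rw [RelIso.mul_apply, eq₁ v hv, eq₂ _ (Finset.mem_image_of_mem c hv), hxc]

theorem closure_pair_toEquiv (f g : G ≃g G) :
    Subgroup.closure ({f.toEquiv, g.toEquiv} : Set (Equiv.Perm V)) =
      (Subgroup.closure {f, g}).map (MulAction.toPermHom (G ≃g G) V) := by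
  rw [MonoidHom.map_closure, Set.image_pair]
  rfl

end SimpleGraph

theorem stmt_19_general {V : Type*} [Countable V] (n : ℕ) (G : SimpleGraph V)
    (hfree : G.CliqueFree n) (halice : AliceProp G n) (f : G ≃g G) :
    letI := autTop G
    {g : G ≃g G |
        (∀ v : V, {w : V | Equiv.Perm.SameCycle g.toEquiv v w}.Infinite) ∧
        Dense {h : G ≃g G | h.toEquiv ∈ Subgroup.closure
          ({f.toEquiv, g.toEquiv} : Set (Equiv.Perm V))}} =
      {g : G ≃g G |
        (∀ v : V, {w : V | Equiv.Perm.SameCycle g.toEquiv v w}.Infinite) ∧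
        ∀ (s : Finset V) (φ : V → V),
          Set.InjOn φ ↑s →
          (∀ a ∈ s, ∀ b ∈ s, (G.Adj a b ↔ G.Adj (φ a) (φ b))) →
          (∃ g₀ : G ≃g G, ∀ z ∈ s, g₀ z = φ z) →
          Disjoint (↑s : Set V) (φ '' ↑s) →
          (∀ a ∈ s, ∀ b ∈ s, ¬ G.Adj a (φ b)) →
          ∃ h ∈ Subgroup.closure ({f.toEquiv, g.toEquiv} : Set (Equiv.Perm V)),
            ∀ z ∈ s, h z = φ z} := by
  ext g
  refine and_congr_right fun _ => ?_
  have hinj : Function.Injective (MulAction.toPermHom (G ≃g G) V) := MulAction.toPerm_injective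
  have hclosure : {h : G ≃g G | h.toEquiv ∈ Subgroup.closure
      ({f.toEquiv, g.toEquiv} : Set (Equiv.Perm V))} = Subgroup.closure {f, g} := by
    ext h
    rw [SimpleGraph.closure_pair_toEquiv]
    exact Subgroup.mem_map_iff_mem hinj
  rw [hclosure, SimpleGraph.dense_subgroup_iff_forall_exists_eqOn hfree halice,
    SimpleGraph.closure_pair_toEquiv]
  simp only [Subgroup.mem_map, exists_exists_and_eq_and]
  constructor
  · rintro hH s φ - - ⟨a, ha⟩ hdisj hadj
    rw [Set.image_congr fun z hz => (ha z hz).symm] at hdisj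
    obtain ⟨h, hh, heq⟩ := hH a s hdisj fun u hu v hv => ha v hv ▸ hadj u hu v hv
    exact ⟨h, hh, fun z hz => (heq z hz).trans (ha z hz)⟩
  · exact fun hH a s => hH s a a.injective.injOn (fun _ _ _ _ => a.map_adj_iff.symm)
      ⟨a, fun _ _ => rfl⟩

/-- Let n ≥ 3, H(n) the universal K_n-free graph, and P the set of
finite partial isomorphisms p of H(n) with dom(p) ∩ ran(p) = ∅ and no edges between
dom(p) and ran(p).  Then for f ∈ Aut(H(n)), the set of g ∈ I(H(n)) (automorphisms
with all orbits infinite) with ⟨f,g⟩ dense in Aut(H(n)) equals the intersection over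
p ∈ P of the sets {g ∈ I(H(n)) : some element of ⟨f,g⟩ extends p}. -/
theorem stmt_19 {V : Type*} [Countable V] (n : ℕ) (hn : 3 ≤ n) (G : SimpleGraph V)
    (hfree : G.CliqueFree n) (halice : AliceProp G n) (f : G ≃g G) :
    letI := autTop G
    {g : G ≃g G |
        (∀ v : V, {w : V | Equiv.Perm.SameCycle g.toEquiv v w}.Infinite) ∧
        Dense {h : G ≃g G | h.toEquiv ∈ Subgroup.closure
          ({f.toEquiv, g.toEquiv} : Set (Equiv.Perm V))}} =
      {g : G ≃g G |
        (∀ v : V, {w : V | Equiv.Perm.SameCycle g.toEquiv v w}.Infinite) ∧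
        ∀ (s : Finset V) (φ : V → V),
          Set.InjOn φ ↑s →
          (∀ a ∈ s, ∀ b ∈ s, (G.Adj a b ↔ G.Adj (φ a) (φ b))) →
          (∃ g₀ : G ≃g G, ∀ z ∈ s, g₀ z = φ z) →
          Disjoint (↑s : Set V) (φ '' ↑s) →
          (∀ a ∈ s, ∀ b ∈ s, ¬ G.Adj a (φ b)) →
          ∃ h ∈ Subgroup.closure ({f.toEquiv, g.toEquiv} : Set (Equiv.Perm V)),
            ∀ z ∈ s, h z = φ z} :=
  stmt_19_general n G hfree halice f
end
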